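/- arXiv:1806.06995 — 5 statements merged into one kernel-verified Lean document; each statement's English description precedes it below -/
import Mathlib

section
/- Let T be a triangulated category and let A, B, C be full subcategories of T, each closed under isomorphisms. Then the operation * defined by A*B = {x ∈ T : there exists a distinguished triangle a → x → b → a[1] with a ∈ A, b ∈ B} is associative: (A*B)*C = A*(B*C). -/
open CategoryTheory CategoryTheory.Limits CategoryTheory.Pretriangulated

universe v u

variable (T : Type u) [Category.{v} T] [Preadditive T] [HasZeroObject T]
  [HasShift T ℤ] [∀ n : ℤ, (shiftFunctor T n).Additive] [Pretriangulated T]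

/-- `A * B` : the objects `x` fitting in a distinguished triangle `a ⟶ x ⟶ b ⟶ a⟦1⟧`
with `a ∈ A` and `b ∈ B`. -/
def starSet (A B : Set T) : Set T :=
  {X | ∃ (a : T) (b : T) (f : a ⟶ X) (g : X ⟶ b) (h : b ⟶ a⟦(1 : ℤ)⟧),
    (Triangle.mk f g h ∈ distTriang T) ∧ a ∈ A ∧ b ∈ B}

lemma mem_starSet_of_triangle (A B : Set T) (Tr : Triangle T) (hTr : Tr ∈ distTriang T)
    (ha : Tr.obj₁ ∈ A) (hb : Tr.obj₃ ∈ B) : Tr.obj₂ ∈ starSet T A B :=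
  ⟨Tr.obj₁, Tr.obj₃, Tr.mor₁, Tr.mor₂, Tr.mor₃, hTr, ha, hb⟩

/-- The operation `*` on isomorphism-closed full subcategories is associative. -/
theorem starSet_assoc [IsTriangulated T] (A B C : Set T)
    (hA : ∀ {X Y : T}, (X ≅ Y) → X ∈ A → Y ∈ A)
    (hB : ∀ {X Y : T}, (X ≅ Y) → X ∈ B → Y ∈ B)
    (hC : ∀ {X Y : T}, (X ≅ Y) → X ∈ C → Y ∈ C) :
    starSet T (starSet T A B) C = starSet T A (starSet T B C) := by
  ext x
  constructor
  · rintro ⟨y, c, f, g, h, hT, ⟨a, b, f', g', h', hT', ha, hb⟩, hc⟩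
    obtain ⟨z, g'', h'', hT''⟩ := distinguished_cocone_triangle (f' ≫ f)
    have oct := Triangulated.someOctahedron (u₁₂ := f') (u₂₃ := f) (u₁₃ := f' ≫ f) rfl
      hT' hT hT''
    exact ⟨a, z, f' ≫ f, g'', h'', hT'', ha,
      ⟨b, c, oct.m₁, oct.m₃, _, oct.mem, hb, hc⟩⟩
  · rintro ⟨a, z, f, g, h, hT, ha, ⟨b, c, f', g', h', hT', hb, hc⟩⟩
    obtain ⟨w, gw, hw, hTw⟩ := distinguished_cocone_triangle (g ≫ g')
    have oct := Triangulated.someOctahedron (u₁₂ := g) (u₂₃ := g') (u₁₃ := g ≫ g') rfl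
      (rot_of_distTriang _ hT) (rot_of_distTriang _ hT') hTw
    -- `oct.triangle : a⟦1⟧ ⟶ w ⟶ b⟦1⟧ ⟶ a⟦1⟧⟦1⟧` is distinguished.
    have hw' : w⟦(-1 : ℤ)⟧ ∈ starSet T A B := by
      have := mem_starSet_of_triangle T A B
        ((CategoryTheory.shiftFunctor (Triangle T) (-1 : ℤ)).obj oct.triangle)
        (Triangle.shift_distinguished _ oct.mem (-1))
        (hA ((shiftFunctorCompIsoId T (1 : ℤ) (-1 : ℤ) (by ring)).symm.app a) ha)
        (hB ((shiftFunctorCompIsoId T (1 : ℤ) (-1 : ℤ) (by ring)).symm.app b) hb)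
      exact this
    have := mem_starSet_of_triangle T (starSet T A B) C
      (Triangle.invRotate (Triangle.mk (g ≫ g') gw hw))
      (inv_rot_of_distTriang _ hTw) hw' hc
    exact this
end

section
/- Let T be a triangulated category with coproducts, and let {G_i : i ∈ I} be a set of compact objects. If every triangulated subcategory S ⊆ T that is closed under coproducts and contains all G_i equals T, then for any object X with Hom(G_i, X[n]) = 0 for all i ∈ I and all n ∈ ℤ, we have X ≅ 0. -/
open CategoryTheory CategoryTheory.Limits CategoryTheory.Pretriangulated

universe v u

variable (T : Type u) [Category.{v} T] [Preadditive T] [HasZeroObject T]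
  [HasShift T ℤ] [∀ n : ℤ, (shiftFunctor T n).Additive] [Pretriangulated T]

/-- The canonical comparison map `⊕ Hom(G, f j) ⟶ Hom(G, ∐ f)`. -/
noncomputable def coprodCompare (G : T) (J : Type v) [DecidableEq J] (f : J → T)
    [HasCoproduct f] : (DirectSum J (fun j => G ⟶ f j)) →+ (G ⟶ ∐ f) :=
  DirectSum.toAddMonoid (fun j => AddMonoidHom.mk' (fun φ => φ ≫ Sigma.ι f j)
    (fun _ _ => Preadditive.add_comp _ _ _ _ _ _))

/-- An object `G` is compact if `Hom(G, -)` commutes with coproducts. -/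
def IsCompactObj (G : T) : Prop :=
  ∀ (J : Type v) [DecidableEq J] (f : J → T) [HasCoproduct f],
    Function.Bijective (coprodCompare T G J f)

/-- A triangulated subcategory of `T`, closed under isomorphisms and under
all (existing) small coproducts. -/
structure CoprodClosedTriangulatedSub where
  carrier : Set T
  zero_mem : ∀ X : T, IsZero X → X ∈ carrier
  iso_closed : ∀ {X Y : T}, (X ≅ Y) → X ∈ carrier → Y ∈ carrier
  shift_mem : ∀ X ∈ carrier, X⟦(1 : ℤ)⟧ ∈ carrier
  shift_neg_mem : ∀ X ∈ carrier, X⟦(-1 : ℤ)⟧ ∈ carrier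
  ext_mem : ∀ Tr ∈ distTriang T, Tr.obj₁ ∈ carrier → Tr.obj₂ ∈ carrier → Tr.obj₃ ∈ carrier
  coprod_mem : ∀ (J : Type v) (f : J → T) [HasCoproduct f],
    (∀ j, f j ∈ carrier) → (∐ f) ∈ carrier

/-- If the `G i` are compact and the only coproduct-closed triangulated subcategory
containing them is `T` itself, then an object orthogonal to all shifts of all `G i`
is zero. -/
theorem generation_implies_orthogonality_detects_zero [HasCoproducts.{v} T]
    {I : Type v} (G : I → T) (hcpt : ∀ i, IsCompactObj T (G i))
    (hgen : ∀ S : CoprodClosedTriangulatedSub T, (∀ i, G i ∈ S.carrier) →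
      S.carrier = Set.univ)
    (X : T) (hX : ∀ (i : I) (n : ℤ) (f : G i ⟶ X⟦n⟧), f = 0) :
    IsZero X := by
  -- key: the orthogonality class is closed under any shift
  have key : ∀ (Y : T), (∀ (n : ℤ) (f : Y ⟶ X⟦n⟧), f = 0) →
      ∀ (k n : ℤ) (f : Y⟦k⟧ ⟶ X⟦n⟧), f = 0 := by
    intro Y hY k n f
    obtain ⟨g, hg⟩ := (shiftFunctor T k).map_surjective
      (f ≫ (shiftFunctorAdd' T (n - k) k n (by ring)).hom.app X)
    rw [← cancel_mono ((shiftFunctorAdd' T (n - k) k n (by ring)).hom.app X), ← hg,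
      hY (n - k) g, Functor.map_zero, zero_comp]
  let S : CoprodClosedTriangulatedSub T :=
    { carrier := {Y | ∀ (n : ℤ) (f : Y ⟶ X⟦n⟧), f = 0}
      zero_mem := fun Y hY n f => hY.eq_of_src f 0
      iso_closed := fun {A B} e hA n f => by
        have h := hA n (e.hom ≫ f)
        calc f = e.inv ≫ e.hom ≫ f := by simp
        _ = 0 := by rw [h, comp_zero]
      shift_mem := fun Y hY => key Y hY 1
      shift_neg_mem := fun Y hY => key Y hY (-1)
      ext_mem := fun Tr hTr h1 h2 n f => by
        obtain ⟨g, hg⟩ := Triangle.yoneda_exact₃ Tr hTr f (h2 n _)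
        rw [hg, key _ h1 1 n g, comp_zero]
      coprod_mem := fun J f _ hf n g => by
        ext j
        rw [hf j n (Sigma.ι f j ≫ g), comp_zero] }
  have hXmem : X ∈ S.carrier := by
    rw [hgen S (fun i n f => hX i n f)]; trivial
  rw [IsZero.iff_id_eq_zero]
  have h0 := hXmem 0 ((shiftFunctorZero T ℤ).inv.app X)
  calc 𝟙 X = (shiftFunctorZero T ℤ).inv.app X ≫ (shiftFunctorZero T ℤ).hom.app X := by simp
  _ = 0 := by rw [h0, zero_comp]
end

section
/- Let T be a triangulated category with coproducts and {G_i : i ∈ I} a set of compact objects. If for every object X ∈ T, the vanishing Hom(G_i, X[n]) = 0 for all i ∈ I, n ∈ ℤ implies X ≅ 0, then any triangulated subcategory S ⊆ T closed under coproducts and containing all G_i equals T. -/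
open CategoryTheory CategoryTheory.Limits CategoryTheory.Pretriangulated

universe v u

variable (T : Type u) [Category.{v} T] [Preadditive T] [HasZeroObject T]
  [HasShift T ℤ] [∀ n : ℤ, (shiftFunctor T n).Additive] [Pretriangulated T]

set_option linter.unusedSectionVars false
set_option maxHeartbeats 1000000

namespace OrthGenAux

section Telescope

variable {A : ℕ → Type*} [∀ k, AddCommGroup (A k)] (t : ∀ k, A k →+ A (k+1))

/-- The `ℕ`-indexed direct sum, with index lifted to `Type v`. -/
abbrev DS (A : ℕ → Type*) [∀ k, AddCommGroup (A k)] : Type _ :=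
  DirectSum (ULift.{v} ℕ) (fun k => A k.down)

variable (A) in
/-- Inclusion of the `k`-th component. -/
noncomputable abbrev dof (k : ℕ) : A k →+ DS.{v} A :=
  DirectSum.of (fun j : ULift.{v} ℕ => A j.down) ⟨k⟩

/-- The "shift" endomorphism of the direct sum given by the transition maps. -/
noncomputable def smap : DS.{v} A →+ DS.{v} A :=
  DirectSum.toAddMonoid
    (fun k => (DirectSum.of (fun j : ULift.{v} ℕ => A j.down) ⟨k.down+1⟩).comp (t k.down))

lemma smap_of (k : ℕ) (a : A k) :
    smap.{v} t (dof.{v} A k a) = dof.{v} A (k+1) (t k a) :=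
  DirectSum.toAddMonoid_of _ _ _

lemma smap_apply_zero (x : DS.{v} A) : smap.{v} t x ⟨0⟩ = 0 := by
  induction x using DirectSum.induction_on with
  | zero => simp
  | of j a =>
    rcases j with ⟨j⟩
    rw [smap_of]
    exact DirectSum.of_eq_of_ne _ _ _ (by simp)
  | add x y hx hy => rw [map_add, DFinsupp.add_apply, hx, hy, add_zero]

lemma smap_apply_succ (x : DS.{v} A) (k : ℕ) : smap.{v} t x ⟨k+1⟩ = t k (x ⟨k⟩) := by
  induction x using DirectSum.induction_on with
  | zero => simp
  | of j a =>
    rcases j with ⟨j⟩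
    rw [smap_of]
    by_cases h : j = k
    · subst h
      rw [DirectSum.of_eq_same, DirectSum.of_eq_same]
    · rw [DirectSum.of_eq_of_ne _ _ _ (by simp [Ne.symm h]), DirectSum.of_eq_of_ne _ _ _ (by simp [Ne.symm h]),
        map_zero]
  | add x y hx hy => rw [map_add, DFinsupp.add_apply, DFinsupp.add_apply, hx, hy, map_add]

lemma eq_zero_of_smap_fixed {x : DS.{v} A} (h : smap.{v} t x = x) : x = 0 := by
  have key : ∀ k : ℕ, x ⟨k⟩ = 0 := by
    intro k
    induction k with
    | zero => rw [← h]; exact smap_apply_zero t x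
    | succ k ih => rw [← h, smap_apply_succ, ih, map_zero]
  refine DFinsupp.ext fun j => ?_
  rcases j with ⟨j⟩
  rw [key j]
  rfl

lemma raise_to (k : ℕ) (a : A k) (m : ℕ) (h : k ≤ m) :
    ∃ (b : A m) (w : DS.{v} A),
      w - smap.{v} t w = dof.{v} A k a - dof.{v} A m b := by
  induction m, h using Nat.le_induction with
  | base => exact ⟨a, 0, by simp⟩
  | succ m hm ih =>
    obtain ⟨b, w, hw⟩ := ih
    refine ⟨t m b, w + dof.{v} A m b, ?_⟩
    rw [map_add, smap_of]
    rw [show w + dof.{v} A m b - (smap.{v} t w + dof.{v} A (m+1) (t m b)) =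
      (w - smap.{v} t w) + (dof.{v} A m b - dof.{v} A (m+1) (t m b)) by abel, hw]
    abel

lemma decomp (x : DS.{v} A) :
    ∃ (N : ℕ) (y : A N) (w : DS.{v} A),
      w - smap.{v} t w = x - dof.{v} A N y := by
  induction x using DirectSum.induction_on with
  | zero => exact ⟨0, 0, 0, by simp⟩
  | of j a =>
    rcases j with ⟨j⟩
    exact ⟨j, a, 0, by simp [dof]⟩
  | add x y hx hy =>
    obtain ⟨N₁, y₁, w₁, h₁⟩ := hx
    obtain ⟨N₂, y₂, w₂, h₂⟩ := hy
    obtain ⟨b₁, u₁, hu₁⟩ := raise_to t N₁ y₁ (max N₁ N₂) (le_max_left _ _)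
    obtain ⟨b₂, u₂, hu₂⟩ := raise_to t N₂ y₂ (max N₁ N₂) (le_max_right _ _)
    refine ⟨max N₁ N₂, b₁ + b₂, w₁ + w₂ + u₁ + u₂, ?_⟩
    rw [show w₁ + w₂ + u₁ + u₂ - smap.{v} t (w₁ + w₂ + u₁ + u₂) =
      (w₁ - smap.{v} t w₁) + (w₂ - smap.{v} t w₂) + (u₁ - smap.{v} t u₁) +
      (u₂ - smap.{v} t u₂) by simp only [map_add]; abel, h₁, h₂, hu₁, hu₂, map_add]
    abel

end Telescope

variable {T}

noncomputable def shEq (n : ℤ) (A W : T) : ((A⟦-n⟧ : T) ⟶ W) ≃ (A ⟶ W⟦n⟧) :=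
  (shiftEquiv' T (-n) n (by omega)).toAdjunction.homEquiv A W

lemma shEq_natural (n : ℤ) {A W W' : T} (g : (A⟦-n⟧ : T) ⟶ W) (k : W ⟶ W') :
    shEq n A W' (g ≫ k) = shEq n A W g ≫ k⟦n⟧' :=
  Adjunction.homEquiv_naturality_right _ _ _

lemma shEq_symm_natural (n : ℤ) {A W W' : T} (f : A ⟶ W⟦n⟧) (k : W ⟶ W') :
    (shEq n A W').symm (f ≫ k⟦n⟧') = (shEq n A W).symm f ≫ k :=
  Adjunction.homEquiv_naturality_right_symm _ _ _

lemma shEq_zero (n : ℤ) (A W : T) : shEq n A W 0 = 0 := by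
  erw [shEq, Adjunction.homEquiv_unit]
  show _ ≫ (shiftFunctor T n).map 0 = 0; erw [Functor.map_zero, comp_zero]

lemma shEq_symm_zero (n : ℤ) (A W : T) : (shEq n A W).symm 0 = 0 := by
  erw [shEq, Adjunction.homEquiv_counit]
  show (shiftFunctor T (-n)).map 0 ≫ _ = 0; erw [Functor.map_zero, zero_comp]

lemma mem_shift (S : CoprodClosedTriangulatedSub T) {X : T} (hX : X ∈ S.carrier) (n : ℤ) :
    (X⟦n⟧ : T) ∈ S.carrier := by
  induction n using Int.induction_on with
  | zero => exact S.iso_closed ((shiftFunctorZero T ℤ).symm.app X) hX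
  | succ m hm =>
    exact S.iso_closed (((shiftFunctorAdd' T (m : ℤ) 1 (m+1) rfl).app X).symm)
      (S.shift_mem _ hm)
  | pred m hm =>
    exact S.iso_closed (((shiftFunctorAdd' T (-(m : ℤ)) (-1) (-(m : ℤ)-1) (by ring)).app X).symm)
      (S.shift_neg_mem _ hm)

section Tower

variable [HasCoproducts.{v} T] {I : Type v}
variable (S : CoprodClosedTriangulatedSub T) (G : I → T) (X : T)

/-- Index type for the base object. -/
abbrev PIdx : Type v := Σ (i : I) (n : ULift.{v} ℤ), (G i ⟶ X⟦n.down⟧)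

noncomputable def baseObj : T :=
  ∐ (fun p : PIdx G X => (G p.1)⟦-p.2.1.down⟧)

noncomputable def basePi : baseObj G X ⟶ X :=
  Sigma.desc fun p => (shEq p.2.1.down (G p.1) X).symm p.2.2

lemma base_mem (hGS : ∀ i, G i ∈ S.carrier) : baseObj G X ∈ S.carrier :=
  S.coprod_mem _ _ (fun p => mem_shift S (hGS p.1) _)

lemma base_surj (i : I) (n : ℤ) (f : G i ⟶ X⟦n⟧) :
    ∃ φ : G i ⟶ (baseObj G X)⟦n⟧, φ ≫ (basePi G X)⟦n⟧' = f := by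
  refine ⟨shEq n (G i) _ (Sigma.ι (fun p : PIdx G X => (G p.1)⟦-p.2.1.down⟧) ⟨i, ⟨n⟩, f⟩), ?_⟩
  erw [← shEq_natural, basePi, Sigma.ι_desc, Equiv.apply_symm_apply]

lemma step (A : T) (eA : A ⟶ X) (hA : A ∈ S.carrier) (hGS : ∀ i, G i ∈ S.carrier) :
    ∃ (B : T) (d : A ⟶ B) (eB : B ⟶ X), B ∈ S.carrier ∧ d ≫ eB = eA ∧
      ∀ (i : I) (n : ℤ) (g : G i ⟶ A⟦n⟧), g ≫ eA⟦n⟧' = 0 → g ≫ d⟦n⟧' = 0 := by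
  let Q : Type v := Σ (i : I) (n : ULift.{v} ℤ), {g : G i ⟶ A⟦n.down⟧ // g ≫ eA⟦n.down⟧' = 0}
  let fam : Q → T := fun q => (G q.1)⟦-q.2.1.down⟧
  let κ : (∐ fam) ⟶ A := Sigma.desc fun q => (shEq q.2.1.down (G q.1) A).symm q.2.2.1
  obtain ⟨B, d, δ, hdist⟩ := distinguished_cocone_triangle κ
  have hκe : κ ≫ eA = 0 := by
    apply Sigma.hom_ext
    intro q
    simp only [κ, comp_zero, ← Category.assoc, Sigma.ι_desc]
    rw [← shEq_symm_natural, q.2.2.2, shEq_symm_zero]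
  obtain ⟨eB, heB⟩ := Triangle.yoneda_exact₂ _ hdist eA hκe
  have hκd : κ ≫ d = 0 := comp_distTriang_mor_zero₁₂ _ hdist
  refine ⟨B, d, eB, ?_, heB.symm, ?_⟩
  · exact S.ext_mem _ hdist (S.coprod_mem _ _ (fun q => mem_shift S (hGS q.1) _)) hA
  · intro i n g hg
    have h1 : (shEq n (G i) A).symm g ≫ d = 0 := by
      have : (shEq n (G i) A).symm g = Sigma.ι fam (⟨i, ⟨n⟩, ⟨g, hg⟩⟩ : Q) ≫ κ := by
        simp only [κ, Sigma.ι_desc]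
      rw [this, Category.assoc, hκd, comp_zero]
    have h2 : (shEq n (G i) B).symm (g ≫ d⟦n⟧') = 0 := by
      rw [shEq_symm_natural, h1]
    have h3 : g ≫ d⟦n⟧' = shEq n (G i) B 0 := by
      rw [← h2, Equiv.apply_symm_apply]
    rw [h3, shEq_zero]
/-- One step of the tower, with choices made. -/
noncomputable def stepData (A : T) (eA : A ⟶ X) (hA : A ∈ S.carrier)
    (hGS : ∀ i, G i ∈ S.carrier) :
    Σ' (B : T) (d : A ⟶ B) (eB : B ⟶ X), B ∈ S.carrier ∧ d ≫ eB = eA ∧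
      ∀ (i : I) (n : ℤ) (g : G i ⟶ A⟦n⟧), g ≫ eA⟦n⟧' = 0 → g ≫ d⟦n⟧' = 0 := by
  have h := step S G X A eA hA hGS
  exact ⟨h.choose, h.choose_spec.choose, h.choose_spec.choose_spec.choose,
    h.choose_spec.choose_spec.choose_spec⟩

variable (hGS : ∀ i, G i ∈ S.carrier)

noncomputable def tower : ℕ → Σ' (A : T) (_ : A ⟶ X), A ∈ S.carrier :=
  fun k => Nat.rec (motive := fun _ => Σ' (A : T) (_ : A ⟶ X), A ∈ S.carrier)
    ⟨baseObj G X, basePi G X, base_mem S G X hGS⟩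
    (fun _ p => ⟨(stepData S G X p.1 p.2.1 p.2.2 hGS).1,
                 (stepData S G X p.1 p.2.1 p.2.2 hGS).2.2.1,
                 (stepData S G X p.1 p.2.1 p.2.2 hGS).2.2.2.1⟩) k

noncomputable def tobj (k : ℕ) : T := (tower S G X hGS k).1

noncomputable def teX (k : ℕ) : tobj S G X hGS k ⟶ X := (tower S G X hGS k).2.1

lemma tmem (k : ℕ) : tobj S G X hGS k ∈ S.carrier := (tower S G X hGS k).2.2

noncomputable def td (k : ℕ) : tobj S G X hGS k ⟶ tobj S G X hGS (k+1) :=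
  (stepData S G X (tower S G X hGS k).1 (tower S G X hGS k).2.1
    (tower S G X hGS k).2.2 hGS).2.1

lemma td_comm (k : ℕ) : td S G X hGS k ≫ teX S G X hGS (k+1) = teX S G X hGS k :=
  (stepData S G X (tower S G X hGS k).1 (tower S G X hGS k).2.1
    (tower S G X hGS k).2.2 hGS).2.2.2.2.1

lemma td_kill (k : ℕ) (i : I) (n : ℤ) (g : G i ⟶ (tobj S G X hGS k)⟦n⟧)
    (hg : g ≫ (teX S G X hGS k)⟦n⟧' = 0) : g ≫ (td S G X hGS k)⟦n⟧' = 0 :=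
  (stepData S G X (tower S G X hGS k).1 (tower S G X hGS k).2.1
    (tower S G X hGS k).2.2 hGS).2.2.2.2.2 i n g hg

lemma tsurj (i : I) (n : ℤ) (f : G i ⟶ X⟦n⟧) :
    ∃ φ : G i ⟶ (tobj S G X hGS 0)⟦n⟧, φ ≫ (teX S G X hGS 0)⟦n⟧' = f :=
  base_surj G X i n f

end Tower


section Cat

variable {T : Type u} [Category.{v} T] [Preadditive T] [HasZeroObject T]
  [HasShift T ℤ] [∀ n : ℤ, (shiftFunctor T n).Additive] [Pretriangulated T]
  [HasCoproducts.{v} T]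

/-- The comparison map `⊕ₖ Hom(G, obₖ⟦n⟧) → Hom(G, (∐ ob)⟦n⟧)`. -/
noncomputable def theta (Gc : T) (n : ℤ) (ob : ℕ → T) :
    DS.{v} (fun k => (Gc ⟶ (ob k)⟦n⟧)) →+ (Gc ⟶ (∐ fun k : ULift.{v} ℕ => ob k.down)⟦n⟧) :=
  (AddMonoidHom.mk'
      (fun φ => φ ≫ sigmaComparison (shiftFunctor T n) (fun k : ULift.{v} ℕ => ob k.down))
      (fun _ _ => Preadditive.add_comp _ _ _ _ _ _)).comp
    (coprodCompare T Gc _ (fun k : ULift.{v} ℕ => (ob k.down)⟦n⟧))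

lemma theta_of (Gc : T) (n : ℤ) (ob : ℕ → T) (k : ℕ) (g : Gc ⟶ (ob k)⟦n⟧) :
    theta Gc n ob (dof.{v} _ k g) =
      g ≫ (Sigma.ι (fun k : ULift.{v} ℕ => ob k.down) ⟨k⟩)⟦n⟧' := by
  simp only [theta, AddMonoidHom.comp_apply, coprodCompare, dof]
  erw [DirectSum.toAddMonoid_of]
  simp [ι_comp_sigmaComparison]

lemma theta_bijective (Gc : T) (hGc : IsCompactObj T Gc) (n : ℤ) (ob : ℕ → T) :
    Function.Bijective (theta.{v} Gc n ob) := by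
  have h1 := hGc (ULift.{v} ℕ) (fun k => (ob k.down)⟦n⟧)
  have h2 : Function.Bijective (fun φ : Gc ⟶ ∐ (fun k : ULift.{v} ℕ => (ob k.down)⟦n⟧) =>
      φ ≫ sigmaComparison (shiftFunctor T n) (fun k : ULift.{v} ℕ => ob k.down)) := by
    constructor
    · intro a b hab
      simpa using hab =≫ inv (sigmaComparison (shiftFunctor T n) _)
    · intro ψ
      exact ⟨ψ ≫ inv (sigmaComparison (shiftFunctor T n) _), by simp⟩
  exact h2.comp h1

/-- The transition maps on Hom groups. -/
noncomputable def tmap (Gc : T) (n : ℤ) {ob : ℕ → T} (d : ∀ k, ob k ⟶ ob (k+1)) (k : ℕ) :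
    (Gc ⟶ (ob k)⟦n⟧) →+ (Gc ⟶ (ob (k+1))⟦n⟧) :=
  AddMonoidHom.mk' (fun g => g ≫ (d k)⟦n⟧') (fun _ _ => Preadditive.add_comp _ _ _ _ _ _)

lemma theta_smap (Gc : T) (n : ℤ) {ob : ℕ → T} (d : ∀ k, ob k ⟶ ob (k+1))
    (x : DS.{v} (fun k => (Gc ⟶ (ob k)⟦n⟧))) :
    theta Gc n ob (smap.{v} (tmap Gc n d) x) =
      theta Gc n ob x ≫
        (Sigma.desc fun k : ULift.{v} ℕ =>
          d k.down ≫ Sigma.ι (fun j : ULift.{v} ℕ => ob j.down) ⟨k.down+1⟩)⟦n⟧' := by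
  have : (theta.{v} Gc n ob).comp (smap.{v} (tmap Gc n d)) =
      (AddMonoidHom.mk' (fun φ : Gc ⟶ (∐ fun k : ULift.{v} ℕ => ob k.down)⟦n⟧ =>
          φ ≫ (Sigma.desc fun k : ULift.{v} ℕ =>
            d k.down ≫ Sigma.ι (fun j : ULift.{v} ℕ => ob j.down) ⟨k.down+1⟩)⟦n⟧')
        (fun _ _ => Preadditive.add_comp _ _ _ _ _ _)).comp (theta.{v} Gc n ob) := by
    refine DirectSum.addHom_ext fun k g => ?_
    rcases k with ⟨k⟩
    simp only [AddMonoidHom.comp_apply]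
    erw [smap_of (tmap Gc n d) k g]
    rw [theta_of, theta_of]
    simp only [tmap, AddMonoidHom.mk'_apply, Category.assoc, ← Functor.map_comp]
    congr 2
    simp
  exact DFunLike.congr_fun this x

end Cat

end OrthGenAux

/-- If the `G i` are compact and vanishing of `Hom(G i, X[n])` for all `i, n` forces
`X ≅ 0`, then any coproduct-closed triangulated subcategory containing the `G i`
is all of `T`. -/
theorem orthogonality_implies_generation [HasCoproducts.{v} T]
    {I : Type v} (G : I → T) (hcpt : ∀ i, IsCompactObj T (G i))
    (hdet : ∀ X : T, (∀ (i : I) (n : ℤ) (f : G i ⟶ X⟦n⟧), f = 0) → IsZero X)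
    (S : CoprodClosedTriangulatedSub T) (hS : ∀ i, G i ∈ S.carrier) :
    S.carrier = Set.univ := by
  open OrthGenAux in
  apply Set.eq_univ_of_forall
  intro X
  -- the tower of approximations
  let ob : ℕ → T := tobj S G X hS
  let eXk : ∀ k, ob k ⟶ X := teX S G X hS
  let dk : ∀ k, ob k ⟶ ob (k+1) := td S G X hS
  -- the telescope
  let Y : ULift.{v} ℕ → T := fun k => ob k.down
  let sm : (∐ Y) ⟶ (∐ Y) :=
    Sigma.desc fun k : ULift.{v} ℕ => dk k.down ≫ Sigma.ι (fun j : ULift.{v} ℕ => ob j.down) ⟨k.down+1⟩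
  obtain ⟨H, hm, δ, hdistH⟩ := distinguished_cocone_triangle (𝟙 (∐ Y) - sm)
  let descE : (∐ Y) ⟶ X := Sigma.desc fun k => eXk k.down
  have h0 : (𝟙 (∐ Y) - sm) ≫ descE = 0 := by
    apply Sigma.hom_ext
    intro k
    simp only [comp_zero, Preadditive.comp_sub, Preadditive.sub_comp, Category.id_comp,
      ← Category.assoc, Sigma.ι_desc, sm, descE]
    rw [Category.assoc, Sigma.ι_desc]
    show teX S G X hS k.down - td S G X hS k.down ≫ teX S G X hS (k.down+1) = 0
    rw [td_comm]
    exact sub_self _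
  obtain ⟨e, he₀⟩ := Triangle.yoneda_exact₂ _ hdistH descE h0
  have he : descE = hm ≫ e := he₀
  -- a key vanishing principle
  have keyFactor : ∀ (i : I) (n : ℤ) (z : DS.{v} (fun k => (G i ⟶ (ob k)⟦n⟧)))
      (W : T) (c : (∐ Y) ⟶ W), ((𝟙 (∐ Y) - sm) ≫ c = 0) →
      theta (G i) n ob (z - smap.{v} (tmap (G i) n dk) z) ≫ c⟦n⟧' = 0 := by
    intro i n z W c hc
    have h1 : theta (G i) n ob (z - smap.{v} (tmap (G i) n dk) z) =
        theta (G i) n ob z ≫ (𝟙 (∐ Y) - sm)⟦n⟧' := by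
      rw [map_sub, theta_smap]
      simp only [sm, Functor.map_sub, CategoryTheory.Functor.map_id, Preadditive.comp_sub,
        Category.comp_id]
      erw [CategoryTheory.Functor.map_id, Category.comp_id]
    rw [h1, Category.assoc, ← Functor.map_comp, hc, Functor.map_zero, comp_zero]
  have hθsub : ∀ (i : I) (m : ℤ) (z : DS.{v} (fun k => (G i ⟶ (ob k)⟦m⟧))),
      theta (G i) m ob (z - smap.{v} (tmap (G i) m dk) z) =
        theta (G i) m ob z ≫ (𝟙 (∐ Y) - sm)⟦m⟧' := by
    intro i m z
    rw [map_sub, theta_smap]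
    simp only [sm, Functor.map_sub, CategoryTheory.Functor.map_id, Preadditive.comp_sub,
      Category.comp_id]
    erw [CategoryTheory.Functor.map_id, Category.comp_id]
  have hc1 : (𝟙 (∐ Y) - sm) ≫ hm = 0 := comp_distTriang_mor_zero₁₂ _ hdistH
  -- injectivity of e on G-homs in every degree
  have inj : ∀ (i : I) (n : ℤ) (φ : G i ⟶ H⟦n⟧), φ ≫ e⟦n⟧' = 0 → φ = 0 := by
    intro i n φ hφ
    have hdist' := Triangle.shift_distinguished _ hdistH n
    have hzero31 : δ ≫ (𝟙 (∐ Y) - sm)⟦(1:ℤ)⟧' = 0 := comp_distTriang_mor_zero₃₁ _ hdistH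
    -- step 1 : the composite with the shifted third morphism vanishes
    have hψ' : (φ ≫ δ⟦n⟧' ≫ (shiftFunctorComm T 1 n).hom.app (∐ Y)) ≫
        ((shiftFunctorAdd' T n 1 (n+1) rfl).app (∐ Y)).inv = 0 := by
      have hvan : ((φ ≫ δ⟦n⟧' ≫ (shiftFunctorComm T 1 n).hom.app (∐ Y)) ≫
          ((shiftFunctorAdd' T n 1 (n+1) rfl).app (∐ Y)).inv) ≫
            (𝟙 (∐ Y) - sm)⟦(n+1 : ℤ)⟧' = 0 := by
        have n1 : ((shiftFunctorAdd' T n 1 (n+1) rfl).app (∐ Y)).inv ≫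
            (𝟙 (∐ Y) - sm)⟦(n+1:ℤ)⟧' =
            (((𝟙 (∐ Y) - sm)⟦n⟧')⟦(1:ℤ)⟧') ≫
              ((shiftFunctorAdd' T n 1 (n+1) rfl).app (∐ Y)).inv :=
          ((shiftFunctorAdd' T n 1 (n+1) rfl).inv.naturality _).symm
        have n2 : (shiftFunctorComm T 1 n).hom.app (∐ Y) ≫ (((𝟙 (∐ Y) - sm)⟦n⟧')⟦(1:ℤ)⟧') =
            (((𝟙 (∐ Y) - sm)⟦(1:ℤ)⟧')⟦n⟧') ≫ (shiftFunctorComm T 1 n).hom.app (∐ Y) :=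
          ((shiftFunctorComm T 1 n).hom.naturality _).symm
        simp only [Category.assoc]
        rw [n1, reassoc_of% n2, ← Functor.map_comp_assoc, hzero31, Functor.map_zero,
          zero_comp, comp_zero]
      obtain ⟨x, hx⟩ := (theta_bijective (G i) (hcpt i) (n+1) ob).2
        ((φ ≫ δ⟦n⟧' ≫ (shiftFunctorComm T 1 n).hom.app (∐ Y)) ≫
          ((shiftFunctorAdd' T n 1 (n+1) rfl).app (∐ Y)).inv)
      have h2 : theta (G i) (n+1) ob (x - smap.{v} (tmap (G i) (n+1) dk) x) = 0 := by
        rw [hθsub, hx, hvan]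
      have h3 : x - smap.{v} (tmap (G i) (n+1) dk) x = 0 := by
        apply (theta_bijective (G i) (hcpt i) (n+1) ob).1
        rw [h2, map_zero]
      have h3' : smap.{v} (tmap (G i) (n+1) dk) x = x := by
        have := sub_eq_zero.mp h3
        exact this.symm
      have h4 : x = 0 := eq_zero_of_smap_fixed _ h3'
      rw [← hx, h4, map_zero]
    have hψ : φ ≫ δ⟦n⟧' ≫ (shiftFunctorComm T 1 n).hom.app (∐ Y) = 0 := by
      rw [← cancel_mono (((shiftFunctorAdd' T n 1 (n+1) rfl).app (∐ Y)).inv), zero_comp]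
      exact hψ'
    have hmor3 : φ ≫ ((CategoryTheory.shiftFunctor (Triangle T) n).obj
        (Triangle.mk (𝟙 (∐ Y) - sm) hm δ)).mor₃ = 0 := by
      show φ ≫ (n.negOnePow • δ⟦n⟧' ≫ (shiftFunctorComm T 1 n).hom.app (∐ Y)) = 0
      rw [Linear.comp_units_smul, hψ, smul_zero]
    obtain ⟨χ, hχ⟩ := Triangle.coyoneda_exact₃ _ hdist' φ hmor3
    have hχ' : φ = (n.negOnePow • χ) ≫ hm⟦n⟧' := by
      rw [hχ]
      show χ ≫ (n.negOnePow • hm⟦n⟧') = _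
      erw [Linear.comp_units_smul, Linear.units_smul_comp]
      rfl
    have hχe : (n.negOnePow • χ) ≫ descE⟦n⟧' = 0 := by
      have heq : φ ≫ e⟦n⟧' = (n.negOnePow • χ) ≫ descE⟦n⟧' := by
        erw [hχ', he, Functor.map_comp, Category.assoc]
        rfl
      rw [← heq, hφ]
    obtain ⟨x, hx⟩ := (theta_bijective (G i) (hcpt i) n ob).2 (n.negOnePow • χ)
    obtain ⟨N, y, w, hw⟩ := decomp (tmap (G i) n dk) x
    have hyN : y ≫ (teX S G X hS N)⟦n⟧' = 0 := by
      have hxd : theta (G i) n ob (x - dof.{v} _ N y) ≫ descE⟦n⟧' = 0 := by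
        rw [← hw]; exact keyFactor i n w X descE h0
      have hxx : theta (G i) n ob x ≫ descE⟦n⟧' = 0 := by rw [hx]; exact hχe
      have hsplit : dof.{v} (fun k => (G i ⟶ (ob k)⟦n⟧)) N y = x - (x - dof.{v} _ N y) := by
        abel
      have h₁ : theta (G i) n ob (dof.{v} _ N y) ≫ descE⟦n⟧' = 0 := by
        rw [hsplit, map_sub, Preadditive.sub_comp, hxx, hxd, sub_zero]
      rw [theta_of] at h₁
      rw [Category.assoc, ← Functor.map_comp] at h₁
      simp only [descE, Sigma.ι_desc] at h₁
      exact h₁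
    have hkill : y ≫ (td S G X hS N)⟦n⟧' = 0 := td_kill S G X hS N i n y hyN
    have hsm0 : smap.{v} (tmap (G i) n dk) (dof.{v} _ N y) = 0 := by
      rw [smap_of]
      have hz : tmap (G i) n dk N y = 0 := hkill
      rw [hz, map_zero]
    have hx2 : x = (w + dof.{v} _ N y) - smap.{v} (tmap (G i) n dk) (w + dof.{v} _ N y) := by
      rw [map_add, hsm0, add_zero]
      have hx3 : x = (w - smap.{v} (tmap (G i) n dk) w) + dof.{v} _ N y := by
        rw [hw]; abel
      rw [hx3]; abel
    erw [hχ', ← hx, hx2, hθsub, Category.assoc, ← Functor.map_comp, hc1, Functor.map_zero,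
      comp_zero]
  -- surjectivity of e on G-homs in every degree
  have surj : ∀ (i : I) (n : ℤ) (f : G i ⟶ X⟦n⟧), ∃ φ : G i ⟶ H⟦n⟧, φ ≫ e⟦n⟧' = f := by
    intro i n f
    obtain ⟨φ₀, hφ₀⟩ := tsurj S G X hS i n f
    have hcomp : Sigma.ι Y ⟨0⟩ ≫ descE = teX S G X hS 0 := Sigma.ι_desc _ _
    refine ⟨φ₀ ≫ (Sigma.ι Y ⟨0⟩ ≫ hm)⟦n⟧', ?_⟩
    erw [Category.assoc, ← Functor.map_comp, Category.assoc, ← he, hcomp]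
    exact hφ₀
  -- the cone of e
  obtain ⟨Z, vz, wz, hdistZ⟩ := distinguished_cocone_triangle e
  have hZv : ∀ (i : I) (n : ℤ) (f : G i ⟶ Z⟦n⟧), f = 0 := by
    intro i n f
    have hdistZ' := Triangle.shift_distinguished _ hdistZ n
    have hzero31 : wz ≫ e⟦(1:ℤ)⟧' = 0 := comp_distTriang_mor_zero₃₁ _ hdistZ
    have hψ' : ((f ≫ wz⟦n⟧' ≫ (shiftFunctorComm T 1 n).hom.app H) ≫
        ((shiftFunctorAdd' T n 1 (n+1) rfl).app H).inv) ≫ e⟦(n+1 : ℤ)⟧' = 0 := by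
      have n1 : ((shiftFunctorAdd' T n 1 (n+1) rfl).app H).inv ≫ e⟦(n+1:ℤ)⟧' =
          ((e⟦n⟧')⟦(1:ℤ)⟧') ≫ ((shiftFunctorAdd' T n 1 (n+1) rfl).app X).inv :=
        ((shiftFunctorAdd' T n 1 (n+1) rfl).inv.naturality _).symm
      have n2 : (shiftFunctorComm T 1 n).hom.app H ≫ ((e⟦n⟧')⟦(1:ℤ)⟧') =
          ((e⟦(1:ℤ)⟧')⟦n⟧') ≫ (shiftFunctorComm T 1 n).hom.app X :=
        ((shiftFunctorComm T 1 n).hom.naturality _).symm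
      simp only [Category.assoc]
      erw [n1, Category.assoc, reassoc_of% n2, Category.assoc, ← Functor.map_comp_assoc, hzero31, Functor.map_zero,
        zero_comp, comp_zero]
    have hψ'' : (f ≫ wz⟦n⟧' ≫ (shiftFunctorComm T 1 n).hom.app H) ≫
        ((shiftFunctorAdd' T n 1 (n+1) rfl).app H).inv = 0 :=
      inj i (n+1) _ hψ'
    have hψ : f ≫ wz⟦n⟧' ≫ (shiftFunctorComm T 1 n).hom.app H = 0 := by
      rw [← cancel_mono (((shiftFunctorAdd' T n 1 (n+1) rfl).app H).inv), zero_comp]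
      exact hψ''
    have hmor3 : f ≫ ((CategoryTheory.shiftFunctor (Triangle T) n).obj
        (Triangle.mk e vz wz)).mor₃ = 0 := by
      show f ≫ (n.negOnePow • wz⟦n⟧' ≫ (shiftFunctorComm T 1 n).hom.app H) = 0
      rw [Linear.comp_units_smul, hψ, smul_zero]
    obtain ⟨χ, hχ⟩ := Triangle.coyoneda_exact₃ _ hdistZ' f hmor3
    have hχ' : f = (n.negOnePow • χ) ≫ vz⟦n⟧' := by
      rw [hχ]
      show χ ≫ (n.negOnePow • vz⟦n⟧') = _
      erw [Linear.comp_units_smul, Linear.units_smul_comp]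
      rfl
    obtain ⟨φ, hφ⟩ := surj i n (n.negOnePow • χ)
    have hev : e ≫ vz = 0 := comp_distTriang_mor_zero₁₂ _ hdistZ
    erw [hχ', ← hφ, Category.assoc, ← Functor.map_comp, hev, Functor.map_zero, comp_zero]
  have hZzero : IsZero Z := hdet Z hZv
  have hIso : IsIso e := (Triangle.isZero₃_iff_isIso₁ _ hdistZ).1 hZzero
  have Hmem : H ∈ S.carrier := by
    have CPmem : (∐ Y) ∈ S.carrier := S.coprod_mem _ _ (fun k => tmem S G X hS k.down)
    exact S.ext_mem _ hdistH CPmem CPmem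
  exact S.iso_closed (asIso e) Hmem
end

section
/- Let T be a triangulated category with coproducts possessing a compact generator G with Hom(G, G[n]) = 0 for all n ≥ 1. Then T is approximable. -/
set_option linter.unusedSectionVars false
set_option linter.unusedVariables false
set_option maxHeartbeats 1000000


open CategoryTheory CategoryTheory.Limits CategoryTheory.Pretriangulated

universe v u

variable (T : Type u) [Category.{v} T] [Preadditive T] [HasZeroObject T]
  [HasShift T ℤ] [∀ n : ℤ, (shiftFunctor T n).Additive] [Pretriangulated T]

/-- direct summands of objects of `S` (witnessed by a retraction). -/
def smdSet (S : Set T) : Set T :=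
  {X | ∃ Y ∈ S, ∃ (i : X ⟶ Y) (r : Y ⟶ X), i ≫ r = 𝟙 X}

/-- `A[m,n] = ∪ A[-i]` for `m ≤ i ≤ n`. -/
def intervalSet (A : Set T) (m n : ℤ) : Set T :=
  {X | ∃ a ∈ A, ∃ i : ℤ, m ≤ i ∧ i ≤ n ∧ Nonempty (X ≅ a⟦-i⟧)}

/-- closure under finite coproducts. -/
def addFin (S : Set T) : Set T :=
  {X | ∃ (J : Type) (_ : Finite J) (f : J → T) (c : Cofan f),
    Nonempty (IsColimit c) ∧ (∀ j, f j ∈ S) ∧ Nonempty (X ≅ c.pt)}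

/-- closure under arbitrary (small) coproducts. -/
def addInf (S : Set T) : Set T :=
  {X | ∃ (J : Type v) (f : J → T) (c : Cofan f),
    Nonempty (IsColimit c) ∧ (∀ j, f j ∈ S) ∧ Nonempty (X ≅ c.pt)}

/-- `⟨A⟩_ℓ^{[m,n]}` : Bondal–Van den Bergh generation, finite coproducts version. -/
def genFin (A : Set T) (m n : ℤ) : ℕ → Set T
  | 0 => ∅
  | 1 => smdSet T (addFin T (intervalSet T A m n))
  | (k+2) => smdSet T (starSet T (smdSet T (addFin T (intervalSet T A m n)))
      (genFin A m n (k+1)))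

/-- `⟨A⟩‾_ℓ^{[m,n]}` : Bondal–Van den Bergh generation, arbitrary coproducts version. -/
def genBar (A : Set T) (m n : ℤ) : ℕ → Set T
  | 0 => ∅
  | 1 => smdSet T (addInf T (intervalSet T A m n))
  | (k+2) => smdSet T (starSet T (smdSet T (addInf T (intervalSet T A m n)))
      (genBar A m n (k+1)))

/-- A triangulated category with coproducts is *approximable* if there are a compact
generator `G`, a t-structure and an integer `A > 0` satisfying the two conditions of
the definition of approximability. -/
def Approximable : Prop :=
  ∃ (G : T), IsCompactObj T G ∧
    (∀ X : T, (∀ (n : ℤ) (f : G ⟶ X⟦n⟧), f = 0) → IsZero X) ∧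
    ∃ (t : Triangulated.TStructure T) (A : ℕ), 0 < A ∧
      t.le 0 (G⟦(A : ℤ)⟧) ∧
      (∀ X : T, t.le 0 X → ∀ f : G⟦(-(A : ℤ))⟧ ⟶ X, f = 0) ∧
      (∀ F : T, t.le 0 F →
        ∃ (E : T) (D : T) (f : E ⟶ F) (g : F ⟶ D) (h : D ⟶ E⟦(1 : ℤ)⟧),
          (Triangle.mk f g h ∈ distTriang T) ∧ t.le (-1) D ∧
          E ∈ genBar T {G} (-(A : ℤ)) (A : ℤ) A)

namespace ApproxAux

variable {C : Type u} [Category.{v} C] [Preadditive C] [HasZeroObject C]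
  [HasShift C ℤ] [∀ n : ℤ, (shiftFunctor C n).Additive] [Pretriangulated C]

/-- All maps `X ⟶ Y` vanish. -/
def Orth (X Y : C) : Prop := ∀ f : X ⟶ Y, f = 0

lemma orth_iso_right {X Y Y' : C} (e : Y ≅ Y') (h : Orth X Y) : Orth X Y' := fun f => by
  have : f ≫ e.inv = 0 := h _
  rw [← Category.comp_id f, ← e.inv_hom_id, ← Category.assoc, this, zero_comp]

lemma orth_iso_left {X X' Y : C} (e : X ≅ X') (h : Orth X Y) : Orth X' Y := fun f => by
  have : e.hom ≫ f = 0 := h _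
  rw [← Category.id_comp f, ← e.inv_hom_id, Category.assoc, this, comp_zero]

/-- the shift adjunction -/
noncomputable def shAdj (a b : ℤ) (h : a + b = 0) :
    shiftFunctor C a ⊣ shiftFunctor C b :=
  (shiftEquiv' C a b h).toAdjunction

lemma shAdj_homEquiv_zero (a b : ℤ) (h : a + b = 0) (X Y : C) :
    (shAdj a b h).homEquiv X Y 0 = 0 := by
  rw [Adjunction.homEquiv_unit, Functor.map_zero, comp_zero]

lemma shAdj_homEquiv_symm_zero (a b : ℤ) (h : a + b = 0) (X Y : C) :
    ((shAdj a b h).homEquiv X Y).symm 0 = 0 := by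
  rw [Adjunction.homEquiv_counit, Functor.map_zero, zero_comp]

lemma orth_shift_iff (a b : ℤ) (h : a + b = 0) (X Y : C) :
    Orth (X⟦a⟧) Y ↔ Orth X (Y⟦b⟧) := by
  constructor
  · intro hO f
    have := hO (((shAdj a b h).homEquiv X Y).symm f)
    have := congrArg ((shAdj a b h).homEquiv X Y) this
    rwa [Equiv.apply_symm_apply, shAdj_homEquiv_zero] at this
  · intro hO f
    have := hO (((shAdj a b h).homEquiv X Y) f)
    have := congrArg ((shAdj a b h).homEquiv X Y).symm this
    rwa [Equiv.symm_apply_apply, shAdj_homEquiv_symm_zero] at this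

/-- the shifted cofan -/
@[simps! pt]
noncomputable def shiftCofan {J : Type*} {f : J → C} (c : Cofan f) (a : ℤ) :
    Cofan (fun j => (f j)⟦a⟧) :=
  Cofan.mk (c.pt⟦a⟧) (fun j => (c.inj j)⟦a⟧')

@[simp]
lemma shiftCofan_inj {J : Type*} {f : J → C} (c : Cofan f) (a : ℤ) (j : J) :
    (shiftCofan c a).inj j = (c.inj j)⟦a⟧' := rfl

noncomputable def shiftCofanIsColimit {J : Type*} {f : J → C} (c : Cofan f)
    (hc : IsColimit c) (a : ℤ) : IsColimit (shiftCofan c a) := by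
  have adj := shAdj (C := C) a (-a) (by omega)
  exact mkCofanColimit _
    (fun t => (adj.homEquiv c.pt t.pt).symm
      (hc.desc (Cofan.mk (t.pt⟦-a⟧) (fun j => adj.homEquiv _ _ (t.inj j)))))
    (fun t j => by
      dsimp
      erw [← Adjunction.homEquiv_naturality_left_symm]
      have : c.inj j ≫ hc.desc (Cofan.mk (t.pt⟦-a⟧)
          (fun j => adj.homEquiv _ _ (t.inj j))) = adj.homEquiv _ _ (t.inj j) :=
        hc.fac _ ⟨j⟩
      rw [this, Equiv.symm_apply_apply])
    (fun t m hm => by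
      dsimp at m hm ⊢
      apply (adj.homEquiv _ _).injective
      rw [Equiv.apply_symm_apply]
      refine hc.hom_ext (fun ⟨j⟩ => ?_)
      have h1 : c.ι.app ⟨j⟩ ≫ (adj.homEquiv c.pt t.pt) m
          = adj.homEquiv _ _ ((c.inj j)⟦a⟧' ≫ m) := by
        erw [Adjunction.homEquiv_naturality_left]
        rfl
      erw [h1, hm j]
      exact (hc.fac (Cofan.mk (t.pt⟦-a⟧) (fun j => adj.homEquiv _ _ (t.inj j))) ⟨j⟩).symm)

variable {G : C}

/-- the shift hom-equivalence, as an additive map -/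
noncomputable def shHom (a b : ℤ) (h : a + b = 0) (X Y : C) :
    (X⟦a⟧ ⟶ Y) →+ (X ⟶ Y⟦b⟧) :=
  AddMonoidHom.mk' ((shAdj a b h).homEquiv X Y) (fun f g => by
    rw [Adjunction.homEquiv_unit, Adjunction.homEquiv_unit, Adjunction.homEquiv_unit,
      Functor.map_add, Preadditive.comp_add])

noncomputable def shHomInv (a b : ℤ) (h : a + b = 0) (X Y : C) :
    (X ⟶ Y⟦b⟧) →+ (X⟦a⟧ ⟶ Y) :=
  AddMonoidHom.mk' ((shAdj a b h).homEquiv X Y).symm (fun f g => by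
    rw [Adjunction.homEquiv_counit, Adjunction.homEquiv_counit, Adjunction.homEquiv_counit,
      Functor.map_add, Preadditive.add_comp])

lemma coprodCompare_of {G : C} {J : Type v} [DecidableEq J] (f : J → C) [HasCoproduct f]
    (j : J) (x : G ⟶ f j) :
    coprodCompare C G J f (DirectSum.of _ j x) = x ≫ Sigma.ι f j := by
  rw [coprodCompare, DirectSum.toAddMonoid_of]
  rfl

lemma exists_finset_cofan (hcpt : IsCompactObj C G) {J : Type v} {f : J → C}
    (c : Cofan f) (hc : IsColimit c) (φ : G ⟶ c.pt) :
    ∃ (S : Finset J) (y : ∀ j, G ⟶ f j), φ = ∑ j ∈ S, y j ≫ c.inj j := by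
  classical
  have : HasColimit (Discrete.functor f) := ⟨⟨c, hc⟩⟩
  let e : (∐ f : C) ≅ c.pt := (colimit.isColimit _).coconePointUniqueUpToIso hc
  obtain ⟨y, hy⟩ := (hcpt J f).2 (φ ≫ e.inv)
  refine ⟨DFinsupp.support y, fun j => y j, ?_⟩
  have h1 : φ = (φ ≫ e.inv) ≫ e.hom := by simp
  have h2 : coprodCompare C G J f y = ∑ j ∈ DFinsupp.support y, (y j) ≫ Sigma.ι f j := by
    conv_lhs => rw [← DirectSum.sum_support_of y]
    rw [map_sum]
    exact Finset.sum_congr rfl (fun j _ => coprodCompare_of f j (y j))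
  rw [h1, ← hy, h2, Preadditive.sum_comp]
  refine Finset.sum_congr rfl (fun j _ => ?_)
  rw [Category.assoc]
  congr 1
  exact IsColimit.comp_coconePointUniqueUpToIso_hom _ hc ⟨j⟩

lemma cofan_sum_eq_zero (hcpt : IsCompactObj C G) {J : Type v} [DecidableEq J] {f : J → C}
    (c : Cofan f) (hc : IsColimit c) (S : Finset J) (y : ∀ j, G ⟶ f j)
    (h : ∑ j ∈ S, y j ≫ c.inj j = 0) : ∀ j ∈ S, y j = 0 := by
  classical
  have : HasColimit (Discrete.functor f) := ⟨⟨c, hc⟩⟩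
  let e : (∐ f : C) ≅ c.pt := (colimit.isColimit _).coconePointUniqueUpToIso hc
  have hι : ∀ j, Sigma.ι f j = c.inj j ≫ e.inv := by
    intro j
    rw [Iso.eq_comp_inv]
    exact IsColimit.comp_coconePointUniqueUpToIso_hom _ hc ⟨j⟩
  have key : coprodCompare C G J f (∑ j ∈ S, DirectSum.of _ j (y j)) = 0 := by
    rw [map_sum]
    have : ∀ j ∈ S, coprodCompare C G J f (DirectSum.of _ j (y j)) = y j ≫ c.inj j ≫ e.inv :=
      fun j _ => by rw [coprodCompare_of, hι j]
    rw [Finset.sum_congr rfl this]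
    simp only [← Category.assoc]
    rw [← Preadditive.sum_comp, h, zero_comp]
  have hz : (∑ j ∈ S, DirectSum.of (fun j => G ⟶ f j) j (y j)) = 0 :=
    (hcpt J f).1 (by rw [key, map_zero])
  intro k hk
  have hzk : ∑ j ∈ S, ((DirectSum.of (fun j => G ⟶ f j) j) (y j)) k = 0 := by
    rw [← DFinsupp.finset_sum_apply, hz]
    rfl
  have hsingle := Finset.sum_eq_single_of_mem
    (f := fun j => ((DirectSum.of (fun j => G ⟶ f j) j) (y j)) k) k hk
    (fun j _ hj => DirectSum.of_eq_of_ne _ _ _ (Ne.symm hj))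
  rw [hsingle] at hzk
  have hzz : ((DirectSum.of (fun j => G ⟶ f j) k) (y k)) k = 0 := hzk
  rwa [DirectSum.of_eq_same] at hzz


lemma exists_finset_cofan_shift (hcpt : IsCompactObj C G) (a : ℤ) {J : Type v} {f : J → C}
    (c : Cofan f) (hc : IsColimit c) (φ : G⟦a⟧ ⟶ c.pt) :
    ∃ (S : Finset J) (y : ∀ j, G⟦a⟧ ⟶ f j), φ = ∑ j ∈ S, y j ≫ c.inj j := by
  have h0 : a + (-a) = 0 := by omega
  obtain ⟨S, y', hy'⟩ := exists_finset_cofan hcpt (shiftCofan c (-a))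
    (shiftCofanIsColimit c hc (-a)) ((shAdj a (-a) h0).homEquiv G c.pt φ)
  refine ⟨S, fun j => ((shAdj a (-a) h0).homEquiv G (f j)).symm (y' j), ?_⟩
  have h2 := congrArg ((shAdj (C := C) a (-a) h0).homEquiv G c.pt).symm hy'
  rw [Equiv.symm_apply_apply] at h2
  have h3 : ((shAdj (C := C) a (-a) h0).homEquiv G c.pt).symm
      (∑ j ∈ S, y' j ≫ (shiftCofan c (-a)).inj j)
      = ∑ j ∈ S, (shHomInv a (-a) h0 G c.pt) (y' j ≫ (shiftCofan c (-a)).inj j) :=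
    map_sum (shHomInv a (-a) h0 G c.pt) _ S
  erw [h2, h3]
  refine Finset.sum_congr rfl (fun j _ => ?_)
  show ((shAdj (C := C) a (-a) h0).homEquiv G c.pt).symm (y' j ≫ (c.inj j)⟦-a⟧') = _
  rw [Adjunction.homEquiv_naturality_right_symm]

lemma cofan_sum_eq_zero_shift (hcpt : IsCompactObj C G) (a : ℤ) {J : Type v} [DecidableEq J]
    {f : J → C} (c : Cofan f) (hc : IsColimit c) (S : Finset J) (y : ∀ j, G⟦a⟧ ⟶ f j)
    (h : ∑ j ∈ S, y j ≫ c.inj j = 0) : ∀ j ∈ S, y j = 0 := by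
  have h0 : a + (-a) = 0 := by omega
  have h1 : ∑ j ∈ S, ((shAdj (C := C) a (-a) h0).homEquiv G (f j) (y j))
      ≫ (shiftCofan c (-a)).inj j = 0 := by
    have h2 : ∀ j ∈ S, ((shAdj (C := C) a (-a) h0).homEquiv G (f j) (y j))
        ≫ (shiftCofan c (-a)).inj j
        = (shHom a (-a) h0 G c.pt) (y j ≫ c.inj j) := by
      intro j _
      show _ = (shAdj (C := C) a (-a) h0).homEquiv G c.pt (y j ≫ c.inj j)
      rw [Adjunction.homEquiv_naturality_right]
      rfl
    erw [Finset.sum_congr rfl h2, ← map_sum (shHom a (-a) h0 G c.pt) _ S, h, map_zero]; rfl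
  intro j hj
  have := cofan_sum_eq_zero hcpt (shiftCofan c (-a)) (shiftCofanIsColimit c hc (-a)) S _ h1 j hj
  have h4 := congrArg ((shAdj (C := C) a (-a) h0).homEquiv G (f j)).symm this
  rwa [Equiv.symm_apply_apply, shAdj_homEquiv_symm_zero] at h4

/-- composition of two shifts, as an iso -/
noncomputable def shIso (X : C) (a b c : ℤ) (h : a + b = c) : X⟦a⟧⟦b⟧ ≅ X⟦c⟧ :=
  ((shiftFunctorAdd' C a b c h).app X).symm

section Aisle

variable (G : C)

/-- The aisle generated by non-negative shifts of `G`. -/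
inductive Aisle : C → Prop
  | gen (i : ℤ) (hi : 0 ≤ i) : Aisle (G⟦i⟧)
  | up {X : C} (a : ℤ) (ha : 0 ≤ a) : Aisle X → Aisle (X⟦a⟧)
  | iso {X Y : C} (e : X ≅ Y) : Aisle X → Aisle Y
  | coprod {J : Type v} (f : J → C) (c : Cofan f) (hc : IsColimit c)
      (h : ∀ j, Aisle (f j)) : Aisle c.pt
  | ext {X₁ X₂ X₃ : C} (m₁ : X₁ ⟶ X₂) (m₂ : X₂ ⟶ X₃) (m₃ : X₃ ⟶ X₁⟦(1:ℤ)⟧)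
      (hT : Triangle.mk m₁ m₂ m₃ ∈ distTriang C)
      (h₁ : Aisle X₁) (h₃ : Aisle X₃) : Aisle X₂

variable {G : C}

lemma aisle_van (hcpt : IsCompactObj C G)
    (hvan : ∀ n : ℤ, 1 ≤ n → ∀ f : G ⟶ G⟦n⟧, f = 0)
    {X : C} (hX : Aisle G X) : ∀ i : ℤ, 1 ≤ i → Orth G (X⟦i⟧) := by
  induction hX with
  | gen i' hi' =>
    intro i hi
    exact orth_iso_right (shIso G i' i (i'+i) rfl).symm (fun f => hvan (i'+i) (by omega) f)
  | up a ha _ ih =>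
    intro i hi
    exact orth_iso_right (shIso _ a i (a+i) rfl).symm (ih (a+i) (by omega))
  | iso e _ ih =>
    intro i hi
    exact orth_iso_right ((shiftFunctor C i).mapIso e) (ih i hi)
  | coprod f c hc h ih =>
    intro i hi φ
    obtain ⟨S, y, hy⟩ := exists_finset_cofan hcpt (shiftCofan c i)
      (shiftCofanIsColimit c hc i) φ
    rw [hy]
    exact Finset.sum_eq_zero (fun j _ => by rw [ih j i hi (y j), zero_comp]; rfl)
  | ext m₁ m₂ m₃ hT h₁ h₃ ih₁ ih₃ =>
    intro i hi φ
    have hsTr := Triangle.shift_distinguished _ hT i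
    obtain ⟨g, hg⟩ := Triangle.coyoneda_exact₂ _ hsTr φ (ih₃ i hi _)
    erw [hg, ih₁ i hi g, zero_comp]; rfl

lemma orth_of_aisle (hcpt : IsCompactObj C G) {B : C}
    (hB : ∀ j : ℤ, 0 ≤ j → Orth (G⟦j⟧) B)
    {Z : C} (hZ : Aisle G Z) : ∀ a : ℤ, 0 ≤ a → Orth (Z⟦a⟧) B := by
  induction hZ with
  | gen i hi =>
    intro a ha
    exact orth_iso_left (shIso G i a (i+a) rfl).symm (hB (i+a) (by omega))
  | up b hb _ ih =>
    intro a ha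
    exact orth_iso_left (shIso _ b a (b+a) rfl).symm (ih (b+a) (by omega))
  | iso e _ ih =>
    intro a ha
    exact orth_iso_left ((shiftFunctor C a).mapIso e) (ih a ha)
  | coprod f c hc h ih =>
    intro a ha φ
    refine (shiftCofanIsColimit c hc a).hom_ext (fun ⟨j⟩ => ?_)
    have : (c.inj j)⟦a⟧' ≫ φ = 0 := ih j a ha _
    erw [comp_zero]; exact this
  | ext m₁ m₂ m₃ hT h₁ h₃ ih₁ ih₃ =>
    intro a ha φ
    have hsTr := Triangle.shift_distinguished _ hT a
    obtain ⟨g, hg⟩ := Triangle.yoneda_exact₂ _ hsTr φ (ih₁ a ha _)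
    erw [hg, ih₃ a ha g, comp_zero]; rfl

end Aisle

section Cover

variable [HasCoproducts.{v} C] (G : C)

/-- index of the covering coproduct -/
def CovI (Y : C) : Type v := Σ (p : ULift.{v} ℕ), (G⟦(p.down : ℤ)⟧ ⟶ Y)

/-- the objects of the covering coproduct -/
def covF (Y : C) : CovI G Y → C := fun p => G⟦(p.1.down : ℤ)⟧

/-- the covering coproduct -/
noncomputable def cov (Y : C) : C := ∐ (covF G Y)

/-- the canonical map from the covering coproduct -/
noncomputable def covMap (Y : C) : cov G Y ⟶ Y := Sigma.desc (fun p => p.2)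

lemma aisle_cov (Y : C) : Aisle G (cov G Y) :=
  Aisle.coprod _ (colimit.cocone _) (colimit.isColimit _)
    (fun p => Aisle.gen _ (Int.natCast_nonneg _))

lemma cov_surj (Y : C) (j : ℤ) (hj : 0 ≤ j) (φ : G⟦j⟧ ⟶ Y) :
    ∃ ψ : G⟦j⟧ ⟶ cov G Y, φ = ψ ≫ covMap G Y := by
  lift j to ℕ using hj
  exact ⟨Sigma.ι (covF G Y) ⟨ULift.up j, φ⟩, by erw [covMap, Sigma.ι_desc]⟩

variable (X : C)

lemma step_exists (E : C) (e : E ⟶ X) :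
    ∃ (E' : C) (t : E ⟶ E') (e' : E' ⟶ X),
      t ≫ e' = e ∧ (Aisle G E → Aisle G E') ∧
      (∀ (j : ℤ), 0 ≤ j → ∀ g : G⟦j⟧ ⟶ E, g ≫ e = 0 → g ≫ t = 0) := by
  obtain ⟨Cn, p, q, hT⟩ := distinguished_cocone_triangle e
  have hTR := inv_rot_of_distTriang _ hT
  obtain ⟨E', t, r, hT2⟩ := distinguished_cocone_triangle
    (covMap G ((Triangle.mk e p q).invRotate.obj₁) ≫ (Triangle.mk e p q).invRotate.mor₁)
  have hwe : (Triangle.mk e p q).invRotate.mor₁ ≫ e = 0 :=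
    comp_distTriang_mor_zero₁₂ _ hTR
  obtain ⟨e', he'⟩ := Triangle.yoneda_exact₂ _ hT2 e
    (by erw [Triangle.mk_mor₁, Category.assoc, hwe, comp_zero])
  refine ⟨E', t, e', he'.symm, ?_, ?_⟩
  · intro hE
    exact Aisle.ext _ _ _ (rot_of_distTriang _ hT2) hE
      (Aisle.up 1 (by omega) (aisle_cov G _))
  · intro j hj g hg
    obtain ⟨h, hh⟩ := Triangle.coyoneda_exact₂ _ hTR g hg
    obtain ⟨ψ, hψ⟩ := cov_surj G _ j hj h
    have h0 : (covMap G ((Triangle.mk e p q).invRotate.obj₁)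
        ≫ (Triangle.mk e p q).invRotate.mor₁) ≫ t = 0 := comp_distTriang_mor_zero₁₂ _ hT2
    rw [Category.assoc] at h0
    erw [hh, hψ, Category.assoc, Category.assoc, h0, comp_zero]

/-- the tower of approximations -/
noncomputable def towerData : ∀ _ : ℕ, Σ' (E : C) (e : E ⟶ X), Aisle G E
  | 0 => ⟨cov G X, covMap G X, aisle_cov G X⟩
  | (n+1) =>
    let p := towerData n
    let h := step_exists G X p.1 p.2.1
    ⟨h.choose, h.choose_spec.choose_spec.choose,
      h.choose_spec.choose_spec.choose_spec.2.1 p.2.2⟩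

/-- the objects of the tower -/
noncomputable def twE (n : ℕ) : C := (towerData G X n).1

/-- the maps to `X` -/
noncomputable def twe (n : ℕ) : twE G X n ⟶ X := (towerData G X n).2.1

lemma twAisle (n : ℕ) : Aisle G (twE G X n) := (towerData G X n).2.2

/-- the transition maps -/
noncomputable def twt (n : ℕ) : twE G X n ⟶ twE G X (n+1) :=
  (step_exists G X (twE G X n) (twe G X n)).choose_spec.choose

lemma twt_comm (n : ℕ) : twt G X n ≫ twe G X (n+1) = twe G X n :=
  (step_exists G X (twE G X n) (twe G X n)).choose_spec.choose_spec.choose_spec.1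

lemma twt_kill (n : ℕ) (j : ℤ) (hj : 0 ≤ j) (g : G⟦j⟧ ⟶ twE G X n)
    (hg : g ≫ twe G X n = 0) : g ≫ twt G X n = 0 :=
  (step_exists G X (twE G X n) (twe G X n)).choose_spec.choose_spec.choose_spec.2.2 j hj g hg

lemma twe_zero : twe G X 0 = covMap G X := rfl

end Cover

section Telescope

variable {G : C}

/-- transition maps iterated -/
noncomputable def chainTo (g : ℕ → C) (u : ∀ n, g n ⟶ g (n+1)) (m : ℕ) :
    ∀ k : ℕ, g m ⟶ g (m+k)
  | 0 => 𝟙 (g m)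
  | (k+1) => chainTo g u m k ≫ u (m+k)

lemma tele_zero (hcpt : IsCompactObj C G) (g : ℕ → C) (u : ∀ n, g n ⟶ g (n+1))
    (c : Cofan (fun p : ULift.{v} ℕ => g p.down)) (hc : IsColimit c)
    (σ : c.pt ⟶ c.pt) (hσ : ∀ n : ℕ, c.inj (ULift.up n) ≫ σ = u n ≫ c.inj (ULift.up (n+1)))
    (a : ℤ) (x : G⟦a⟧ ⟶ c.pt) (hx : x = x ≫ σ) : x = 0 := by
  classical
  obtain ⟨S, y, hy⟩ := exists_finset_cofan_shift hcpt a c hc x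
  set N := S.sup (fun p => p.down) + 1 with hNdef
  have hN : ∀ p ∈ S, p.down < N :=
    fun p hp => Nat.lt_succ_of_le (Finset.le_sup (f := fun p : ULift.{v} ℕ => p.down) hp)
  set z : ∀ n : ℕ, (G⟦a⟧ ⟶ g n) :=
    fun n => if h : ULift.up n ∈ S then y (ULift.up n) else 0 with hzdef
  have hSsub : S ⊆ (Finset.range N).image ULift.up := by
    intro p hp
    simp only [Finset.mem_image, Finset.mem_range]
    exact ⟨p.down, hN p hp, rfl⟩
  -- rewrite x as a sum over `range N`
  have claim1 : x = ∑ n ∈ Finset.range N, z n ≫ c.inj (ULift.up n) := by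
    rw [hy]
    rw [Finset.sum_congr rfl (fun p (hp : p ∈ S) => by
      rw [show y p ≫ c.inj p = z p.down ≫ c.inj p by
        simp only [hzdef]; rw [dif_pos (show ULift.up p.down ∈ S from hp)]])]
    rw [Finset.sum_subset hSsub (fun p _ hnp => by
      simp only [hzdef]; rw [dif_neg (show ¬ ULift.up p.down ∈ S from hnp), zero_comp])]
    rw [Finset.sum_image (fun n _ m _ h => congrArg ULift.down h)]
  -- the shifted coefficient family
  set z' : ∀ n : ℕ, (G⟦a⟧ ⟶ g n) :=
    fun n => Nat.casesOn n 0 (fun m => z m ≫ u m) with hz'def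
  have claim2 : x = ∑ n ∈ Finset.range (N+1), z' n ≫ c.inj (ULift.up n) := by
    rw [Finset.sum_range_succ']
    simp only [hz'def]
    rw [show (Nat.casesOn (0:ℕ) (0 : G⟦a⟧ ⟶ g 0) (fun m => z m ≫ u m)
      : G⟦a⟧ ⟶ g 0) ≫ c.inj (ULift.up 0) = 0 from zero_comp, add_zero]
    conv_lhs => rw [hx, claim1]
    rw [Preadditive.sum_comp]
    exact Finset.sum_congr rfl (fun n _ => by
      rw [Category.assoc, hσ n, ← Category.assoc])
  have claim3 : x = ∑ n ∈ Finset.range (N+1),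
      (if n < N then z n else 0) ≫ c.inj (ULift.up n) := by
    rw [Finset.sum_range_succ, if_neg (lt_irrefl N), zero_comp, add_zero, claim1]
    exact Finset.sum_congr rfl (fun n hn => by
      rw [if_pos (Finset.mem_range.mp hn)])
  have hdiff : ∑ n ∈ Finset.range (N+1),
      (z' n - (if n < N then z n else 0)) ≫ c.inj (ULift.up n) = 0 := by
    simp only [Preadditive.sub_comp]
    rw [Finset.sum_sub_distrib, ← claim2, ← claim3, sub_self]
  -- transfer to a `ULift ℕ` indexed sum and apply injectivity
  have hdiff2 : ∑ p ∈ (Finset.range (N+1)).image ULift.up,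
      (z' p.down - (if p.down < N then z p.down else 0)) ≫ c.inj p = 0 := by
    rw [Finset.sum_image (fun n _ m _ h => congrArg ULift.down h)]
    exact hdiff
  have hcoef := cofan_sum_eq_zero_shift hcpt a c hc _ _ hdiff2
  have hzz : ∀ n : ℕ, n < N + 1 → z' n = (if n < N then z n else 0) := by
    intro n hn
    have := hcoef (ULift.up n) (by
      simp only [Finset.mem_image, Finset.mem_range]
      exact ⟨n, hn, rfl⟩)
    exact sub_eq_zero.mp this
  have hz0 : ∀ n : ℕ, n < N → z n = 0 := by
    intro n
    induction n with
    | zero => intro hn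
              have := (hzz 0 (by omega)).symm
              rw [if_pos hn] at this
              exact this
    | succ m ih =>
        intro hn
        have := (hzz (m+1) (by omega)).symm
        rw [if_pos hn] at this
        have hm : z m = 0 := ih (by omega)
        rw [this]
        show z m ≫ u m = 0
        rw [hm, zero_comp]
  rw [claim1]
  exact Finset.sum_eq_zero (fun n hn => by
    rw [hz0 n (Finset.mem_range.mp hn), zero_comp])

end Telescope

section Factor

variable {G : C}

lemma chain_comp_inj (g : ℕ → C) (u : ∀ n, g n ⟶ g (n+1))
    (c : Cofan (fun p : ULift.{v} ℕ => g p.down)) {Eo : C} (π : c.pt ⟶ Eo)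
    (hπ : ∀ n : ℕ, c.inj (ULift.up n) ≫ π = u n ≫ c.inj (ULift.up (n+1)) ≫ π)
    (m : ℕ) : ∀ k : ℕ, c.inj (ULift.up m) ≫ π = chainTo g u m k ≫ c.inj (ULift.up (m+k)) ≫ π := by
  intro k
  induction k with
  | zero =>
      rw [show chainTo g u m 0 = 𝟙 (g m) from rfl, Category.id_comp]
      rfl
  | succ k ih =>
      rw [ih, hπ (m+k)]
      rw [show chainTo g u m (k+1) = chainTo g u m k ≫ u (m+k) from rfl]
      simp only [Category.assoc]
      rfl

lemma cast_inj_comp (g : ℕ → C) (c : Cofan (fun p : ULift.{v} ℕ => g p.down))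
    {Eo : C} (π : c.pt ⟶ Eo) (m m' : ℕ) (e : m = m') :
    eqToHom (congrArg g e) ≫ c.inj (ULift.up m') ≫ π = c.inj (ULift.up m) ≫ π := by
  subst e
  rw [eqToHom_refl, Category.id_comp]

lemma factor_through_stage (hcpt : IsCompactObj C G) (g : ℕ → C) (u : ∀ n, g n ⟶ g (n+1))
    (c : Cofan (fun p : ULift.{v} ℕ => g p.down)) (hc : IsColimit c)
    {Eo : C} (π : c.pt ⟶ Eo)
    (hπ : ∀ n : ℕ, c.inj (ULift.up n) ≫ π = u n ≫ c.inj (ULift.up (n+1)) ≫ π)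
    (a : ℤ) (x : G⟦a⟧ ⟶ c.pt) :
    ∃ (N : ℕ) (h : G⟦a⟧ ⟶ g N), x ≫ π = h ≫ (c.inj (ULift.up N) ≫ π) := by
  classical
  obtain ⟨S, y, hy⟩ := exists_finset_cofan_shift hcpt a c hc x
  set N := S.sup (fun p => p.down) with hNdef
  refine ⟨N, ∑ p ∈ S.attach, y p.1 ≫ chainTo g u p.1.down (N - p.1.down)
    ≫ eqToHom (congrArg g (Nat.add_sub_cancel' (Finset.le_sup
      (f := fun p : ULift.{v} ℕ => p.down) p.2))), ?_⟩
  rw [hy, Preadditive.sum_comp, Preadditive.sum_comp,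
    ← Finset.sum_attach S (fun p => (y p ≫ c.inj p) ≫ π)]
  refine Finset.sum_congr rfl (fun p _ => ?_)
  simp only [Category.assoc]
  congr 1
  rw [cast_inj_comp g c π _ _ (Nat.add_sub_cancel' (Finset.le_sup
      (f := fun p : ULift.{v} ℕ => p.down) p.2))]
  rw [← chain_comp_inj g u c π hπ p.1.down (N - p.1.down)]

end Factor

section AdjZero

lemma adj_homEquiv_zero {F Gf : C ⥤ C} (adj : F ⊣ Gf) [Gf.Additive] (X Y : C) :
    adj.homEquiv X Y 0 = 0 := by
  rw [Adjunction.homEquiv_unit, CategoryTheory.Functor.map_zero, comp_zero]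

lemma adj_homEquiv_symm_zero {F Gf : C ⥤ C} (adj : F ⊣ Gf) [F.Additive] (X Y : C) :
    (adj.homEquiv X Y).symm 0 = 0 := by
  rw [Adjunction.homEquiv_counit, CategoryTheory.Functor.map_zero, zero_comp]

end AdjZero

section Main

variable [HasCoproducts.{v} C] {G : C}

lemma exists_approx_triangle (hcpt : IsCompactObj C G)
    (hvan : ∀ n : ℤ, 1 ≤ n → ∀ f : G ⟶ G⟦n⟧, f = 0) (X : C) :
    ∃ (E B : C) (f : E ⟶ X) (gm : X ⟶ B) (hm : B ⟶ E⟦(1:ℤ)⟧),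
      (Triangle.mk f gm hm ∈ distTriang C) ∧ Aisle G E ∧
      (∀ j : ℤ, 0 ≤ j → Orth (G⟦j⟧) B) := by
  classical
  set fJ : ULift.{v} ℕ → C := fun p => twE G X p.down with hfJ
  set c : Cofan fJ := colimit.cocone (Discrete.functor fJ) with hcdef
  have hc : IsColimit c := colimit.isColimit _
  set σ : c.pt ⟶ c.pt :=
    Sigma.desc (fun p => twt G X p.down ≫ Sigma.ι fJ (ULift.up (p.down+1))) with hσdef
  set ex : c.pt ⟶ X := Sigma.desc (fun p => twe G X p.down) with hexdef
  have hισ : ∀ n : ℕ, c.inj (ULift.up n) ≫ σ = twt G X n ≫ c.inj (ULift.up (n+1)) := by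
    intro n
    show Sigma.ι fJ (ULift.up n) ≫ σ = _
    rw [hσdef, Sigma.ι_desc]
    rfl
  have hιex : ∀ n : ℕ, c.inj (ULift.up n) ≫ ex = twe G X n := by
    intro n
    show Sigma.ι fJ (ULift.up n) ≫ ex = _
    rw [hexdef, Sigma.ι_desc]
  obtain ⟨Eo, π, δ, hTE⟩ := distinguished_cocone_triangle (𝟙 c.pt - σ)
  have hπσ : π = σ ≫ π := by
    have h0 : (𝟙 c.pt - σ) ≫ π = 0 := comp_distTriang_mor_zero₁₂ _ hTE
    rw [Preadditive.sub_comp, Category.id_comp] at h0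
    exact sub_eq_zero.mp h0
  have hπrel : ∀ n : ℕ, c.inj (ULift.up n) ≫ π
      = twt G X n ≫ c.inj (ULift.up (n+1)) ≫ π := by
    intro n
    conv_lhs => rw [hπσ]
    rw [← Category.assoc, hισ n, Category.assoc]
  have hσex : σ ≫ ex = ex := by
    refine hc.hom_ext (fun ⟨p⟩ => ?_)
    show c.inj p ≫ σ ≫ ex = c.inj p ≫ ex
    rw [← Category.assoc]
    rw [show c.inj p ≫ σ = twt G X p.down ≫ c.inj (ULift.up (p.down+1)) from hισ p.down]
    rw [Category.assoc, hιex (p.down+1), twt_comm]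
    exact (hιex p.down).symm
  have hex0 : (𝟙 c.pt - σ) ≫ ex = 0 := by
    rw [Preadditive.sub_comp, Category.id_comp, hσex, sub_self]
  obtain ⟨eE, heE⟩ := Triangle.yoneda_exact₂ _ hTE ex hex0
  change Eo ⟶ X at eE
  replace heE : ex = π ≫ eE := heE
  have hAc : Aisle G c.pt := Aisle.coprod _ c hc (fun p => twAisle G X p.down)
  have hAEo : Aisle G Eo :=
    Aisle.ext _ _ _ (rot_of_distTriang _ hTE) hAc (Aisle.up 1 (by omega) hAc)
  -- injectivity on the homotopy colimit
  have hK2 : ∀ (i : ℤ), 0 ≤ i → ∀ γ : G⟦i⟧ ⟶ Eo, γ ≫ eE = 0 → γ = 0 := by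
    intro i hi γ hγ
    have hxσ : (γ ≫ δ) = (γ ≫ δ) ≫ σ⟦(1:ℤ)⟧' := by
      have h31 : δ ≫ (𝟙 c.pt - σ)⟦(1:ℤ)⟧' = 0 := comp_distTriang_mor_zero₃₁ _ hTE
      rw [CategoryTheory.Functor.map_sub, CategoryTheory.Functor.map_id, Preadditive.comp_sub, Category.comp_id] at h31
      have hδσ : δ = δ ≫ σ⟦(1:ℤ)⟧' := sub_eq_zero.mp h31
      rw [Category.assoc, ← hδσ]
    have hδ0 : γ ≫ δ = 0 := by
      refine tele_zero hcpt (fun n => (twE G X n)⟦(1:ℤ)⟧) (fun n => (twt G X n)⟦(1:ℤ)⟧')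
        (shiftCofan c 1) (shiftCofanIsColimit c hc 1) (σ⟦(1:ℤ)⟧') ?_ i (γ ≫ δ) hxσ
      intro n
      show (c.inj (ULift.up n))⟦(1:ℤ)⟧' ≫ σ⟦(1:ℤ)⟧' = _
      rw [← Functor.map_comp, hισ n, Functor.map_comp]
      rfl
    obtain ⟨γ', hγ'⟩ := Triangle.coyoneda_exact₃ _ hTE γ hδ0
    replace hγ' : γ = γ' ≫ π := hγ'
    obtain ⟨N, h, hN⟩ := factor_through_stage hcpt (twE G X) (twt G X) c hc π hπrel i γ'
    have hγfac : γ = h ≫ c.inj (ULift.up N) ≫ π := by erw [hγ', hN]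
    have hkill : h ≫ twe G X N = 0 := by
      have h1 : h ≫ twe G X N = γ ≫ eE := by
        rw [← hιex N, heE, hγfac]
        simp only [Category.assoc]
      rw [h1, hγ]
    have hkill2 : h ≫ twt G X N = 0 := twt_kill G X N i hi h hkill
    rw [hγfac, hπrel N, ← Category.assoc, hkill2, zero_comp]
  obtain ⟨B, b₁, b₂, hTB⟩ := distinguished_cocone_triangle eE
  refine ⟨Eo, B, eE, b₁, b₂, hTB, hAEo, ?_⟩
  intro j hj φ
  have adj := shAdj (C := C) (-1) 1 (by omega)
  set ψ := φ ≫ b₂ with hψdef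
  have hψe : ψ ≫ eE⟦(1:ℤ)⟧' = 0 := by
    have h31 := comp_distTriang_mor_zero₃₁ _ hTB
    rw [hψdef, Category.assoc]
    rw [show b₂ ≫ eE⟦(1:ℤ)⟧' = 0 from h31, comp_zero]
  have hsymm : ((adj.homEquiv (G⟦j⟧) Eo).symm ψ) ≫ eE = 0 := by
    have hnat := Adjunction.homEquiv_naturality_right_symm adj ψ eE
    rw [← hnat, hψe]
    exact adj_homEquiv_symm_zero adj _ _
  set γ := (shIso G j (-1) (j-1) (by omega)).inv ≫ (adj.homEquiv (G⟦j⟧) Eo).symm ψ with hγdef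
  have hγe : γ ≫ eE = 0 := by rw [hγdef, Category.assoc, hsymm, comp_zero]
  have hγ0 : γ = 0 := by
    by_cases hj1 : 1 ≤ j
    · exact hK2 (j-1) (by omega) γ hγe
    · have hj0 : j = 0 := by omega
      subst hj0
      have hor : Orth G (Eo⟦(1:ℤ)⟧) := aisle_van hcpt hvan hAEo 1 (by omega)
      have hor2 : Orth (G⟦(-1:ℤ)⟧) Eo := (orth_shift_iff (-1) 1 (by omega) G Eo).mpr hor
      exact orth_iso_left (eqToIso (by norm_num) : G⟦(-1:ℤ)⟧ ≅ G⟦(0:ℤ)-1⟧) hor2 γ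
  have hs0 : (adj.homEquiv (G⟦j⟧) Eo).symm ψ = 0 := by
    have hrec : (shIso G j (-1) (j-1) (by omega)).hom ≫ γ
        = (adj.homEquiv (G⟦j⟧) Eo).symm ψ := by
      rw [hγdef, Iso.hom_inv_id_assoc]
    rw [← hrec, hγ0, comp_zero]
  have hψ0 : ψ = 0 := by
    have h2 := congrArg (adj.homEquiv (G⟦j⟧) Eo) hs0
    rwa [Equiv.apply_symm_apply, adj_homEquiv_zero adj] at h2
  obtain ⟨χ, hχ⟩ := Triangle.coyoneda_exact₃ _ hTB φ (by
    show φ ≫ b₂ = 0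
    rw [← hψdef, hψ0])
  obtain ⟨ψχ, hψχ⟩ := cov_surj G X j hj χ
  have hχl : χ = (ψχ ≫ c.inj (ULift.up 0) ≫ π) ≫ eE := by
    rw [hψχ, ← twe_zero, ← hιex 0, heE]
    simp only [Category.assoc]; erw [Category.assoc]; rfl
  rw [hχ]
  show χ ≫ b₁ = 0
  rw [hχl, Category.assoc]
  erw [Category.assoc, Category.assoc, show eE ≫ b₁ = 0 from comp_distTriang_mor_zero₁₂ _ hTB, comp_zero, comp_zero]

end Main

section Converse

variable [HasCoproducts.{v} C] {G : C}

lemma aisle_of_orth (hcpt : IsCompactObj C G)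
    (hgen : ∀ Y : C, (∀ (n : ℤ) (f : G ⟶ Y⟦n⟧), f = 0) → IsZero Y)
    (hvan : ∀ n : ℤ, 1 ≤ n → ∀ f : G ⟶ G⟦n⟧, f = 0)
    (X : C) (hX : ∀ i : ℤ, 1 ≤ i → Orth G (X⟦i⟧)) : Aisle G X := by
  obtain ⟨E, B, f, gm, hm, hT, hAE, hB⟩ := exists_approx_triangle hcpt hvan X
  have hBzero : IsZero B := by
    apply hgen
    intro n φ
    by_cases hn : 0 ≤ -n
    · exact (orth_shift_iff (-n) n (by omega) G B).mp (hB (-n) hn) φ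
    · have hn1 : 1 ≤ n := by omega
      have hsTr := Triangle.shift_distinguished _ hT n
      have hO1 : Orth G ((E⟦n⟧)⟦(1:ℤ)⟧) := orth_iso_right (shIso E n 1 (n+1) rfl).symm
        (aisle_van hcpt hvan hAE (n+1) (by omega))
      obtain ⟨χ, hχ⟩ := Triangle.coyoneda_exact₃ _ hsTr φ (hO1 _)
      erw [hχ, hX n hn1 χ, zero_comp]; rfl
  have hiso : IsIso f := Triangle.isZero₃_iff_isIso₁ _ hT |>.mp hBzero
  exact Aisle.iso (asIso f) hAE

end Converse

section TS

variable [HasCoproducts.{v} C] (G : C)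

/-- the t-structure generated by `G` -/
noncomputable def genTS (hcpt : IsCompactObj C G)
    (hvan : ∀ n : ℤ, 1 ≤ n → ∀ f : G ⟶ G⟦n⟧, f = 0) :
    Triangulated.TStructure C where
  le n X := Aisle G (X⟦n⟧)
  ge n X := ∀ Z : C, Aisle G (Z⟦n-1⟧) → Orth Z X
  le_isClosedUnderIsomorphisms n := ⟨fun e hX => Aisle.iso ((shiftFunctor C n).mapIso e) hX⟩
  ge_isClosedUnderIsomorphisms n := ⟨fun e hX Z hZ => orth_iso_right e (hX Z hZ)⟩
  le_shift n a n' h X hX := Aisle.iso (shIso X a n' n h).symm hX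
  ge_shift n a n' h X hX := by
    intro Z hZ
    refine (orth_shift_iff (-a) a (by omega) Z X).mp ?_
    exact hX (Z⟦(-a : ℤ)⟧) (Aisle.iso (shIso Z (-a) (n-1) (n'-1) (by omega)).symm hZ)
  zero' X Y f hX hY := hY X (by
    have h : (1:ℤ)-1 = 0 := by omega
    rw [h]
    exact hX) f
  le_zero_le := fun X hX => Aisle.iso (shIso X 0 1 1 (by omega))
    (Aisle.up 1 (by omega) hX)
  ge_one_le := fun X hX Z hZ =>
    hX Z (Aisle.iso (shIso Z ((0:ℤ)-1) 1 ((1:ℤ)-1) (by omega)) (Aisle.up 1 (by omega) hZ))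
  exists_triangle_zero_one A := by
    obtain ⟨E, B, f, gm, hm, hT, hAE, hB⟩ := exists_approx_triangle hcpt hvan A
    refine ⟨E, B, Aisle.up 0 le_rfl hAE, ?_, f, gm, hm, hT⟩
    intro Z hZ
    refine orth_iso_left
      ((shIso Z ((1:ℤ)-1) 0 0 (by omega)) ≪≫ ((shiftFunctorZero C ℤ).app Z)) ?_
    exact orth_of_aisle hcpt hB hZ 0 le_rfl

end TS

end ApproxAux

/-- If `T` has a compact generator `G` with `Hom(G, G[n]) = 0` for all `n ≥ 1`,
then `T` is approximable. -/
theorem approximable_of_vanishing_positive_selfext [HasCoproducts.{v} T]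
    (G : T) (hcpt : IsCompactObj T G)
    (hgen : ∀ X : T, (∀ (n : ℤ) (f : G ⟶ X⟦n⟧), f = 0) → IsZero X)
    (hvan : ∀ n : ℤ, 1 ≤ n → ∀ f : G ⟶ G⟦n⟧, f = 0) :
    Approximable T := by
  classical
  refine ⟨G, hcpt, hgen, ApproxAux.genTS G hcpt hvan, 1, one_pos, ?_, ?_, ?_⟩
  · show ApproxAux.Aisle G ((G⟦((1:ℕ):ℤ)⟧)⟦(0:ℤ)⟧)
    exact .up 0 le_rfl (.gen _ (by norm_num))
  · intro X hX f
    have hAX : ApproxAux.Aisle G X := .iso ((shiftFunctorZero T ℤ).app X) hX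
    have h1 : ApproxAux.Orth G (X⟦(1:ℤ)⟧) := ApproxAux.aisle_van hcpt hvan hAX 1 le_rfl
    have h2 : ApproxAux.Orth (G⟦(-1:ℤ)⟧) X :=
      (ApproxAux.orth_shift_iff (-1) 1 (by omega) G X).mpr h1
    exact ApproxAux.orth_iso_left (eqToIso (by norm_num)) h2 f
  · intro F hF
    have hAF : ApproxAux.Aisle G F := .iso ((shiftFunctorZero T ℤ).app F) hF
    set J := (G ⟶ F) with hJ
    set fE : J → T := fun _ => G with hfE
    set E := ∐ fE with hE
    set eF : E ⟶ F := Sigma.desc (fun φ => φ) with heF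
    obtain ⟨D, gD, hD, hTD⟩ := distinguished_cocone_triangle eF
    have hAE : ApproxAux.Aisle G E := .coprod fE (colimit.cocone _) (colimit.isColimit _)
      (fun j => .iso ((shiftFunctorZero T ℤ).app G) (.gen 0 le_rfl))
    have hDk : ∀ k : ℤ, 0 ≤ k → ApproxAux.Orth G (D⟦k⟧) := by
      intro k hk φ
      by_cases hk1 : 1 ≤ k
      · have hsTr := Triangle.shift_distinguished _ hTD k
        have hO1 : ApproxAux.Orth G ((E⟦k⟧)⟦(1:ℤ)⟧) :=
          ApproxAux.orth_iso_right (ApproxAux.shIso E k 1 (k+1) rfl).symm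
            (ApproxAux.aisle_van hcpt hvan hAE (k+1) (by omega))
        obtain ⟨χ, hχ⟩ := Triangle.coyoneda_exact₃ _ hsTr φ (hO1 _)
        have hχ0 : χ = 0 := ApproxAux.aisle_van hcpt hvan hAF k hk1 χ
        rw [hχ, hχ0, zero_comp]; rfl
      · have hk0 : k = 0 := by omega
        subst hk0
        set φ' := φ ≫ (shiftFunctorZero T ℤ).hom.app D with hφ'def
        have hO1 : ApproxAux.Orth G (E⟦(1:ℤ)⟧) :=
          ApproxAux.aisle_van hcpt hvan hAE 1 le_rfl
        obtain ⟨χ, hχ⟩ := Triangle.coyoneda_exact₃ _ hTD φ' (hO1 _)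
        replace hχ : φ' = χ ≫ gD := hχ
        have hfac : χ = Sigma.ι fE χ ≫ eF := by erw [heF, Sigma.ι_desc]
        have hφ'0 : φ' = 0 := by
          erw [hχ, hfac, Category.assoc]
          erw [show eF ≫ gD = 0 from comp_distTriang_mor_zero₁₂ _ hTD, comp_zero]
        have hmv : φ = φ' ≫ (shiftFunctorZero T ℤ).inv.app D := by
          rw [hφ'def, Category.assoc, Iso.hom_inv_id_app, Category.comp_id]
        rw [hmv, hφ'0, zero_comp]
    have hLE : ApproxAux.Aisle G (D⟦(-1:ℤ)⟧) := by
      apply ApproxAux.aisle_of_orth hcpt hgen hvan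
      intro i hi
      exact ApproxAux.orth_iso_right (ApproxAux.shIso D (-1) i (-1+i) rfl).symm
        (hDk (-1+i) (by omega))
    refine ⟨E, D, eF, gD, hD, hTD, ?_, ?_⟩
    · show ApproxAux.Aisle G (D⟦((-1:ℤ))⟧)
      exact hLE
    · show E ∈ smdSet T (addInf T (intervalSet T {G} (-((1:ℕ):ℤ)) ((1:ℕ):ℤ)))
      refine ⟨E, ?_, 𝟙 E, 𝟙 E, Category.comp_id _⟩
      refine ⟨J, fE, colimit.cocone _, ⟨colimit.isColimit _⟩, ?_, ⟨Iso.refl _⟩⟩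
      intro j
      refine ⟨G, rfl, 0, by norm_num, by norm_num, ⟨?_⟩⟩
      exact (shiftFunctorZero T ℤ).symm.app G ≪≫ eqToIso (by rw [neg_zero])
end

section
/- Let T be an approximable triangulated category with compact generator G, t-structure (T^{≤0},T^{≥0}) and integer A > 0 witnessing approximability. Then for every integer m > 0 and every object F ∈ T^{≤0}, there exists a distinguished triangle E_m → F → D_m → E_m[1] with D_m ∈ T^{≤-m} and E_m ∈ ⟨G⟩‾_{mA}^{[1-m-A, A]}. -/
open CategoryTheory CategoryTheory.Limits CategoryTheory.Pretriangulated

universe v u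

variable (T : Type u) [Category.{v} T] [Preadditive T] [HasZeroObject T]
  [HasShift T ℤ] [∀ n : ℤ, (shiftFunctor T n).Additive] [Pretriangulated T]

section Helpers

variable {T : Type u} [Category.{v} T] [Preadditive T] [HasZeroObject T]
  [HasShift T ℤ] [∀ n : ℤ, (shiftFunctor T n).Additive] [Pretriangulated T]

open Triangulated Preadditive ZeroObject

variable (t : TStructure T)

/-- general vanishing -/
lemma tzero {X Y : T} (hX : t.le a X) (hY : t.ge b Y) (hab : a < b) (f : X ⟶ Y) : f = 0 := by
  have h1 : t.le 0 (X⟦a⟧) := t.le_shift a a 0 (by omega) X hX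
  have h2 : t.ge 1 (Y⟦a⟧) := by
    have := t.ge_shift b a (b - a) (by omega) Y hY
    exact t.ge_antitone (by omega) _ this
  have : (shiftFunctor T a).map f = 0 := t.zero' _ h1 h2
  apply (shiftFunctor T a).map_injective
  simpa using this
lemma leOfOrth (n : ℤ) (X : T) (hor : ∀ Y : T, t.ge (n+1) Y → ∀ f : X ⟶ Y, f = 0) :
    t.le n X := by
  obtain ⟨A, B, hA, hB, f, g, h', mem⟩ := t.exists_triangle X n (n+1) rfl
  have hg : g = 0 := hor B hB g
  have rotmem := rot_of_distTriang _ mem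
  obtain ⟨tt, htt⟩ := Triangle.yoneda_exact₂ _ rotmem (𝟙 B)
    (by change g ≫ 𝟙 B = 0; rw [hg, zero_comp])
  have htt0 : tt = 0 := tzero t (t.le_shift n 1 (n-1) (by omega) A hA) hB (by omega) tt
  have hBzero : IsZero B := (Limits.IsZero.iff_id_eq_zero B).mpr (by
    rw [htt, htt0, comp_zero]; rfl)
  have : IsIso f := ((Triangle.mk f g h').isZero₃_iff_isIso₁ mem).mp hBzero
  exact (t.le n).prop_of_iso (asIso f) hA
lemma surjShift {P Q : T} (f : P ⟶ Q) (cc : ℤ)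
    (hs : ∀ Y : T, t.ge cc Y → ∀ b : P ⟶ Y, ∃ x : Q ⟶ Y, f ≫ x = b)
    (Y : T) (hY : t.ge (cc-1) Y) (ζ : P⟦(1:ℤ)⟧ ⟶ Y) :
    ∃ x : Q⟦(1:ℤ)⟧ ⟶ Y, (shiftFunctor T (1:ℤ)).map f ≫ x = ζ := by
  let e := shiftEquiv T (1:ℤ)
  let adj := e.toAdjunction
  have hY' : t.ge cc (Y⟦(-1:ℤ)⟧) := t.ge_shift (cc-1) (-1) cc (by omega) Y hY
  obtain ⟨x₀, hx₀⟩ := hs _ hY' (adj.homEquiv P Y ζ)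
  refine ⟨(adj.homEquiv Q Y).symm x₀, ?_⟩
  have := Adjunction.homEquiv_naturality_left_symm adj f x₀
  have h2 : (adj.homEquiv P Y).symm (f ≫ x₀) = ζ := by
    erw [hx₀]; exact Equiv.symm_apply_apply _ _
  exact this.symm.trans h2

lemma injShift {P Q : T} (f : P ⟶ Q) (cc : ℤ)
    (hi : ∀ Y : T, t.ge cc Y → ∀ x : Q ⟶ Y, f ≫ x = 0 → x = 0)
    (Y : T) (hY : t.ge (cc+1) Y) (v : Q⟦(-1:ℤ)⟧ ⟶ Y)
    (hv : (shiftFunctor T (-1:ℤ)).map f ≫ v = 0) : v = 0 := by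
  let e := (shiftEquiv T (1:ℤ)).symm
  let adj := e.toAdjunction
  have hY' : t.ge cc (Y⟦(1:ℤ)⟧) := t.ge_shift (cc+1) 1 cc (by omega) Y hY
  have h0 : adj.homEquiv Q Y v = 0 := by
    apply hi _ hY'
    refine (Adjunction.homEquiv_naturality_left adj f v).symm.trans ?_
    have hv' : e.functor.map f ≫ v = 0 := hv
    rw [hv']
    simp [Adjunction.homEquiv_apply]; rfl
  have : v = (adj.homEquiv Q Y).symm 0 := by rw [← h0]; exact (Equiv.symm_apply_apply _ v).symm
  rw [this, Adjunction.homEquiv_symm_apply]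
  simp; rfl
lemma approxInj {E F C : T} {e : E ⟶ F} {g : F ⟶ C} {h : C ⟶ E⟦(1:ℤ)⟧} (c : ℤ)
    (mem : Triangle.mk e g h ∈ distTriang T) (hC : t.le c C)
    (Y : T) (hY : t.ge (c+1) Y) (x : F ⟶ Y) (hx : e ≫ x = 0) : x = 0 := by
  obtain ⟨y, hy⟩ := Triangle.yoneda_exact₂ _ mem x hx
  rw [hy, tzero t hC hY (by omega) y]; exact comp_zero

lemma approxSurj {E F C : T} {e : E ⟶ F} {g : F ⟶ C} {h : C ⟶ E⟦(1:ℤ)⟧} (c : ℤ)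
    (mem : Triangle.mk e g h ∈ distTriang T) (hC : t.le c C)
    (Y : T) (hY : t.ge (c+2) Y) (b : E ⟶ Y) : ∃ x : F ⟶ Y, e ≫ x = b := by
  have mem' := inv_rot_of_distTriang _ mem
  obtain ⟨x, hx⟩ := Triangle.yoneda_exact₂ _ mem' b
    (tzero t (t.le_shift c (-1) (c+1) (by omega) C hC) hY (by omega) _)
  exact ⟨x, hx.symm⟩

lemma approxOfInjSurj {E F C : T} {e : E ⟶ F} {g : F ⟶ C} {h : C ⟶ E⟦(1:ℤ)⟧} (c : ℤ)
    (mem : Triangle.mk e g h ∈ distTriang T)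
    (hinj : ∀ Y : T, t.ge (c+1) Y → ∀ x : F ⟶ Y, e ≫ x = 0 → x = 0)
    (hsurj : ∀ Y : T, t.ge (c+2) Y → ∀ b : E ⟶ Y, ∃ x : F ⟶ Y, e ≫ x = b) :
    t.le c C := by
  have z12 : e ≫ g = 0 := comp_distTriang_mor_zero₁₂ _ mem
  have z31 : h ≫ (shiftFunctor T (1:ℤ)).map e = 0 := comp_distTriang_mor_zero₃₁ _ mem
  apply leOfOrth t c C
  intro Y hY ψ
  have h1 : g ≫ ψ = 0 := hinj Y hY _ (by rw [← Category.assoc, z12, zero_comp])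
  obtain ⟨ζ, hζ⟩ := Triangle.yoneda_exact₃ _ mem ψ h1
  replace hζ : ψ = h ≫ ζ := hζ
  have hY' : t.ge (c+2-1) Y := by rwa [show c+2-1 = c+1 by ring]
  obtain ⟨xh, hxh⟩ := surjShift t e (c+2) hsurj Y hY' ζ
  rw [hζ, ← hxh, ← Category.assoc, z31, zero_comp]
section Wrappers

variable {X₁ X₂ X₃ : T} {f : X₁ ⟶ X₂} {g : X₂ ⟶ X₃} {h : X₃ ⟶ X₁⟦(1:ℤ)⟧}
  (mem : Triangle.mk f g h ∈ distTriang T) {W : T}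
include mem

lemma yoneda₂' (x : X₂ ⟶ W) (hx : f ≫ x = 0) : ∃ y : X₃ ⟶ W, x = g ≫ y :=
  Triangle.yoneda_exact₂ _ mem x hx

lemma yoneda₃' (x : X₃ ⟶ W) (hx : g ≫ x = 0) : ∃ y : X₁⟦(1:ℤ)⟧ ⟶ W, x = h ≫ y :=
  Triangle.yoneda_exact₃ _ mem x hx

lemma yoneda₁' (z : X₁⟦(1:ℤ)⟧ ⟶ W) (hz : h ≫ z = 0) :
    ∃ y : X₂⟦(1:ℤ)⟧ ⟶ W, z = (shiftFunctor T (1:ℤ)).map f ≫ y := by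
  have hrot2 := rot_of_distTriang _ (rot_of_distTriang _ mem)
  obtain ⟨y, hy⟩ := Triangle.yoneda_exact₂ _ hrot2 z hz
  refine ⟨-y, ?_⟩
  replace hy : z = (-((shiftFunctor T (1:ℤ)).map f)) ≫ y := hy
  rw [hy]; exact (Preadditive.neg_comp _ _).trans (Preadditive.comp_neg _ _).symm

lemma coyoneda₂' (v : W ⟶ X₂) (hv : v ≫ g = 0) : ∃ y : W ⟶ X₁, v = y ≫ f :=
  Triangle.coyoneda_exact₂ _ mem v hv

lemma coyoneda₃' (v : W ⟶ X₃) (hv : v ≫ h = 0) : ∃ y : W ⟶ X₂, v = y ≫ g :=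
  Triangle.coyoneda_exact₃ _ mem v hv

lemma invYoneda₂' (v : X₁ ⟶ W) (hv : (Triangle.mk f g h).invRotate.mor₁ ≫ v = 0) :
    ∃ y : X₂ ⟶ W, v = f ≫ y := by
  obtain ⟨y, hy⟩ := Triangle.yoneda_exact₂ _ (inv_rot_of_distTriang _ mem) v hv
  exact ⟨y, hy⟩

lemma invYoneda₂'' (t : Triangulated.TStructure T) {cl cg : ℤ} (hC : t.le cl X₃)
    (hY : t.ge cg W) (hlt : cl + 1 < cg) (v : X₁ ⟶ W) : ∃ y : X₂ ⟶ W, v = f ≫ y := by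
  apply invYoneda₂' mem v
  exact tzero t (t.le_shift cl (-1) (cl+1) (by omega) X₃ hC) hY hlt _

end Wrappers
lemma chaseB {s E E₂ F' F₁ : T} {α : s ⟶ E} {q : E ⟶ E₂} {σ : s ⟶ F'} {π₁ : F' ⟶ F₁}
    {θ₁ : F₁ ⟶ s⟦(1:ℤ)⟧} {e₂ : E₂ ⟶ F₁} {w : E ⟶ F'} (c : ℤ)
    (hTE : Triangle.mk α q (e₂ ≫ θ₁) ∈ distTriang T)
    (hTF : Triangle.mk σ π₁ θ₁ ∈ distTriang T)
    (hsq1 : α ≫ w = σ) (hsq2 : w ≫ π₁ = q ≫ e₂)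
    (hinj : ∀ Y : T, t.ge (c+1) Y → ∀ x : F₁ ⟶ Y, e₂ ≫ x = 0 → x = 0)
    (hsurj : ∀ Y : T, t.ge (c+2) Y → ∀ b : E₂ ⟶ Y, ∃ x : F₁ ⟶ Y, e₂ ≫ x = b) :
    (∀ Y : T, t.ge (c+1) Y → ∀ x : F' ⟶ Y, w ≫ x = 0 → x = 0) ∧
    (∀ Y : T, t.ge (c+2) Y → ∀ b : E ⟶ Y, ∃ x : F' ⟶ Y, w ≫ x = b) := by
  constructor
  · intro Y hY x hx
    have hσx : σ ≫ x = 0 := by rw [← hsq1, Category.assoc, hx, comp_zero]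
    obtain ⟨y, hy⟩ := yoneda₂' hTF x hσx
    have h2 : q ≫ (e₂ ≫ y) = 0 := by
      rw [← Category.assoc, ← hsq2, Category.assoc, ← hy, hx]
    obtain ⟨z, hz⟩ := yoneda₃' hTE (e₂ ≫ y) h2
    have h3 : e₂ ≫ (y - θ₁ ≫ z) = 0 := by
      rw [comp_sub, hz, Category.assoc, sub_self]
    have h5 : y = θ₁ ≫ z := by
      have := hinj Y hY _ h3; rwa [sub_eq_zero] at this
    have z23 : π₁ ≫ θ₁ = 0 := comp_distTriang_mor_zero₂₃ _ hTF
    rw [hy, h5, ← Category.assoc, z23, zero_comp]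
  · intro Y hY b
    have hY' : t.ge (c+1+1) Y := by rwa [show c+1+1 = c+2 by ring]
    have hIE := inv_rot_of_distTriang _ hTE
    have key : (shiftFunctor T (-1:ℤ)).map e₂ ≫ (Triangle.mk σ π₁ θ₁).invRotate.mor₁
        = (Triangle.mk α q (e₂ ≫ θ₁)).invRotate.mor₁ := by
      dsimp [Triangle.invRotate, Triangle.mk]
      simp [Functor.map_comp]
    have hobs : (Triangle.mk σ π₁ θ₁).invRotate.mor₁ ≫ (α ≫ b) = 0 := by
      apply injShift t e₂ (c+1) hinj Y hY'
      erw [← Category.assoc, key]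
      have h12 : (Triangle.mk α q (e₂ ≫ θ₁)).invRotate.mor₁ ≫ α = 0 :=
        comp_distTriang_mor_zero₁₂ _ hIE
      erw [← Category.assoc, h12, zero_comp]
    obtain ⟨y₁, hy₁⟩ := invYoneda₂' hTF (α ≫ b) hobs
    have h3 : α ≫ (b - w ≫ y₁) = 0 := by
      rw [comp_sub, ← Category.assoc, hsq1, ← hy₁, sub_self]
    obtain ⟨b₂, hb₂⟩ := yoneda₂' hTE (b - w ≫ y₁) h3
    obtain ⟨y₂, hy₂⟩ := hsurj Y hY b₂
    refine ⟨y₁ + π₁ ≫ y₂, ?_⟩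
    rw [comp_add, ← Category.assoc, hsq2, Category.assoc, hy₂, ← hb₂]
    abel

lemma chaseA {s Bh B₂ F' F₁ D : T} {a : s ⟶ Bh} {p : Bh ⟶ B₂} {δ : B₂ ⟶ s⟦(1:ℤ)⟧}
    {Ψ : Bh ⟶ F'} {π₁ : F' ⟶ F₁} {θ₁ : F₁ ⟶ s⟦(1:ℤ)⟧} {ψ₂ : B₂ ⟶ F₁} {π : F' ⟶ D}
    {θ : D ⟶ Bh⟦(1:ℤ)⟧}
    (hR1 : Triangle.mk a p δ ∈ distTriang T)
    (hR2 : Triangle.mk (a ≫ Ψ) π₁ θ₁ ∈ distTriang T)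
    (hTD : Triangle.mk Ψ π θ ∈ distTriang T)
    (hD : t.le (-1) D)
    (hsq2 : p ≫ ψ₂ = Ψ ≫ π₁) (hsq3 : ψ₂ ≫ θ₁ = δ) :
    (∀ Y : T, t.ge 0 Y → ∀ x : F₁ ⟶ Y, ψ₂ ≫ x = 0 → x = 0) ∧
    (∀ Y : T, t.ge 1 Y → ∀ b : B₂ ⟶ Y, ∃ x : F₁ ⟶ Y, ψ₂ ≫ x = b) := by
  constructor
  · intro Y hY x hx
    have h1 : Ψ ≫ (π₁ ≫ x) = 0 := by
      rw [← Category.assoc, ← hsq2, Category.assoc, hx, comp_zero]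
    obtain ⟨y₁, hy₁⟩ := yoneda₂' hTD (π₁ ≫ x) h1
    have hπx : π₁ ≫ x = 0 := by
      rw [hy₁, tzero t hD hY (by omega) y₁, comp_zero]
    obtain ⟨z, hz⟩ := yoneda₃' hR2 x hπx
    have hδz : δ ≫ z = 0 := by rw [← hsq3, Category.assoc, ← hz, hx]
    obtain ⟨g, hg⟩ := yoneda₁' hR1 z hδz
    obtain ⟨y₂, hy₂⟩ := yoneda₁' hTD g (tzero t hD hY (by omega) _)
    have z31 : θ₁ ≫ (shiftFunctor T (1:ℤ)).map (a ≫ Ψ) = 0 :=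
      comp_distTriang_mor_zero₃₁ _ hR2
    rw [hz, hg, hy₂, ← Functor.map_comp_assoc, ← Category.assoc, z31, zero_comp]
  · intro Y hY b
    obtain ⟨y₁, hy₁⟩ := invYoneda₂'' hTD t hD hY (by omega) (p ≫ b)
    have h12 : a ≫ p = 0 := comp_distTriang_mor_zero₁₂ _ hR1
    have h2 : (a ≫ Ψ) ≫ y₁ = 0 := by
      rw [Category.assoc, ← hy₁, ← Category.assoc, h12, zero_comp]
    obtain ⟨y₂, hy₂⟩ := yoneda₂' hR2 y₁ h2
    have h3 : p ≫ (ψ₂ ≫ y₂ - b) = 0 := by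
      rw [comp_sub, ← Category.assoc, hsq2, Category.assoc, ← hy₂, ← hy₁, sub_self]
    have hrot1 := rot_of_distTriang _ hR1
    obtain ⟨z, hz⟩ := Triangle.yoneda_exact₂ _ hrot1 (ψ₂ ≫ y₂ - b) h3
    replace hz : ψ₂ ≫ y₂ - b = δ ≫ z := hz
    refine ⟨y₂ - θ₁ ≫ z, ?_⟩
    erw [comp_sub, ← Category.assoc, hsq3, ← hz]
    abel

lemma chaseC {Ed E M Fs : T} {ι : Ed ⟶ E} {w : E ⟶ M ⊞ Fs} (c : ℤ)
    (hTK : Triangle.mk ι (w ≫ biprod.fst) (0 : M ⟶ Ed⟦(1:ℤ)⟧) ∈ distTriang T)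
    (hinj : ∀ Y : T, t.ge (c+1) Y → ∀ x : M ⊞ Fs ⟶ Y, w ≫ x = 0 → x = 0)
    (hsurj : ∀ Y : T, t.ge (c+2) Y → ∀ b : E ⟶ Y, ∃ x : M ⊞ Fs ⟶ Y, w ≫ x = b) :
    (∀ Y : T, t.ge (c+1) Y → ∀ x : Fs ⟶ Y, (ι ≫ w ≫ biprod.snd) ≫ x = 0 → x = 0) ∧
    (∀ Y : T, t.ge (c+2) Y → ∀ b : Ed ⟶ Y, ∃ x : Fs ⟶ Y, (ι ≫ w ≫ biprod.snd) ≫ x = b) := by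
  have z12 : ι ≫ w ≫ biprod.fst = 0 := comp_distTriang_mor_zero₁₂ _ hTK
  constructor
  · intro Y hY x hx
    obtain ⟨g, hg⟩ := yoneda₂' hTK (w ≫ biprod.snd ≫ x) (by
      simpa only [Category.assoc] using hx)
    have h2 : w ≫ (biprod.snd ≫ x - biprod.fst ≫ g) = 0 := by
      rw [comp_sub]
      rw [Category.assoc] at hg
      rw [← hg]
      simp
    have h3 := hinj Y hY _ h2
    rw [sub_eq_zero] at h3
    have : (biprod.inr : Fs ⟶ M ⊞ Fs) ≫ biprod.snd ≫ x
        = (biprod.inr : Fs ⟶ M ⊞ Fs) ≫ biprod.fst ≫ g := by rw [h3]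
    simpa using this
  · intro Y hY b
    have hm1 : (Triangle.mk ι (w ≫ biprod.fst) (0 : M ⟶ Ed⟦(1:ℤ)⟧)).invRotate.mor₁ = 0 := by
      dsimp [Triangle.invRotate, Triangle.mk]
      simp; rfl
    obtain ⟨y, hy⟩ := invYoneda₂' hTK b (by rw [hm1]; exact zero_comp)
    obtain ⟨x', hx'⟩ := hsurj Y hY y
    refine ⟨biprod.inr ≫ x', ?_⟩
    have htot : (biprod.fst ≫ biprod.inl + biprod.snd ≫ biprod.inr : M ⊞ Fs ⟶ M ⊞ Fs) = 𝟙 _ :=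
      biprod.total
    have : b = ι ≫ w ≫ (biprod.fst ≫ biprod.inl + biprod.snd ≫ biprod.inr) ≫ x' := by
      rw [htot]; simpa [hx'] using hy
    rw [this]
    simp only [add_comp, comp_add, Category.assoc]
    rw [← Category.assoc w, ← Category.assoc w]
    rw [← Category.assoc ι (w ≫ biprod.fst)]
    rw [z12]
    simp [Category.assoc]
lemma splitCompl {B Bh : T} (i : B ⟶ Bh) (r : Bh ⟶ B) (hir : i ≫ r = 𝟙 B) :
    ∃ (M : T) (n : M ⟶ Bh) (e : Bh ≅ M ⊞ B),
      (Triangle.mk n r (0 : B ⟶ M⟦(1:ℤ)⟧) ∈ distTriang T) ∧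
      n ≫ e.hom = biprod.inl ∧ r = e.hom ≫ biprod.snd := by
  obtain ⟨M, n, h0, mem⟩ := distinguished_cocone_triangle₁ r
  haveI : IsSplitEpi r := ⟨⟨⟨i, hir⟩⟩⟩
  have hz : h0 = 0 := Triangle.mor₃_eq_zero_of_epi₂ _ mem (inferInstanceAs (Epi r))
  subst hz
  obtain ⟨e, he1, he2⟩ := exists_iso_binaryBiproduct_of_distTriang _ mem rfl
  exact ⟨M, n, e, mem, he1, he2⟩

lemma cdtmMk {X₁ X₂ X₃ Y₁ Y₂ Y₃ : T} {f : X₁ ⟶ X₂} {g : X₂ ⟶ X₃} {h : X₃ ⟶ X₁⟦(1:ℤ)⟧}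
    {f' : Y₁ ⟶ Y₂} {g' : Y₂ ⟶ Y₃} {h' : Y₃ ⟶ Y₁⟦(1:ℤ)⟧}
    (m1 : Triangle.mk f g h ∈ distTriang T) (m2 : Triangle.mk f' g' h' ∈ distTriang T)
    (a : X₁ ⟶ Y₁) (b : X₂ ⟶ Y₂) (comm : f ≫ b = a ≫ f') :
    ∃ c : X₃ ⟶ Y₃, g ≫ c = b ≫ g' ∧ h ≫ (shiftFunctor T (1:ℤ)).map a = c ≫ h' :=
  complete_distinguished_triangle_morphism _ _ m1 m2 a b comm

lemma sumContractible {B F D M : T} {ψ : B ⟶ F} {π : F ⟶ D} {θ : D ⟶ B⟦(1:ℤ)⟧}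
    (mem : Triangle.mk ψ π θ ∈ distTriang T) :
    ∃ (π' : M ⊞ F ⟶ D) (θ' : D ⟶ (M ⊞ B)⟦(1:ℤ)⟧),
      (Triangle.mk (biprod.map (𝟙 M) ψ) π' θ' ∈ distTriang T) := by
  obtain ⟨D'', π'', θ'', memBig⟩ := distinguished_cocone_triangle (biprod.map (𝟙 M) ψ)
  -- fills
  obtain ⟨c, hc1, hc2⟩ := cdtmMk
    mem memBig biprod.inr biprod.inr (by simp)
  obtain ⟨c', hc'1, hc'2⟩ := cdtmMk
    memBig mem
    biprod.snd biprod.snd (by simp)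
  obtain ⟨c₀, hc01, hc02⟩ := cdtmMk
    memBig (contractible_distinguished M) biprod.fst biprod.fst (by simp)
  obtain ⟨c₁, hc11, hc12⟩ := cdtmMk
    (contractible_distinguished M) memBig biprod.inl biprod.inl (by simp)
  rw [zero_comp] at hc11
  rw [comp_zero] at hc02
  replace hc11 : biprod.inl ≫ π'' = 0 := hc11.symm
  have hc12' : c₁ ≫ θ'' = 0 := by rw [← hc12, zero_comp]
  -- mor₂ ≫ (c' ≫ c) = mor₂ etc.
  have totB : (biprod.fst ≫ biprod.inl + biprod.snd ≫ biprod.inr : M ⊞ B ⟶ M ⊞ B) = 𝟙 _ :=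
    biprod.total
  have totF : (biprod.fst ≫ biprod.inl + biprod.snd ≫ biprod.inr : M ⊞ F ⟶ M ⊞ F) = 𝟙 _ :=
    biprod.total
  have E1 : π'' ≫ (c' ≫ c) = π'' := by
    have : π'' ≫ c' ≫ c = biprod.snd ≫ biprod.inr ≫ π'' := by
      rw [← Category.assoc, hc'1, Category.assoc, hc1]
    rw [this]
    conv_rhs => rw [← Category.id_comp π'', ← totF]
    rw [add_comp, Category.assoc, Category.assoc, hc11, comp_zero, zero_add]
  have E2 : (c' ≫ c) ≫ θ'' = θ'' := by
    have h1 : (c' ≫ c) ≫ θ'' = θ'' ≫ (shiftFunctor T (1:ℤ)).map (biprod.snd ≫ biprod.inr) := by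
      rw [Functor.map_comp, Category.assoc, ← hc2, ← Category.assoc, ← hc'2, Category.assoc]
    have h2 : θ'' ≫ (shiftFunctor T (1:ℤ)).map
        (biprod.fst ≫ biprod.inl : M ⊞ B ⟶ M ⊞ B) = 0 := by
      rw [Functor.map_comp, ← Category.assoc, hc02, zero_comp]
    have h3 : (biprod.snd ≫ biprod.inr + biprod.fst ≫ biprod.inl : M ⊞ B ⟶ M ⊞ B) = 𝟙 _ := by
      rw [add_comm]; exact biprod.total
    calc (c' ≫ c) ≫ θ''
        = θ'' ≫ (shiftFunctor T (1:ℤ)).map (biprod.snd ≫ biprod.inr) + 0 := by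
          rw [h1, add_zero]
      _ = θ'' ≫ (shiftFunctor T (1:ℤ)).map (biprod.snd ≫ biprod.inr)
          + θ'' ≫ (shiftFunctor T (1:ℤ)).map
            (biprod.fst ≫ biprod.inl : M ⊞ B ⟶ M ⊞ B) := by rw [h2]
      _ = θ'' ≫ (shiftFunctor T (1:ℤ)).map
          (biprod.snd ≫ biprod.inr + biprod.fst ≫ biprod.inl : M ⊞ B ⟶ M ⊞ B) := by
          rw [Functor.map_add, comp_add]
      _ = θ'' := by rw [h3, CategoryTheory.Functor.map_id, Category.comp_id]
  have E3 : π ≫ (c ≫ c') = π := by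
    rw [← Category.assoc, hc1, Category.assoc, hc'1, ← Category.assoc]
    simp
  have E4 : (c ≫ c') ≫ θ = θ := by
    rw [Category.assoc, ← hc'2, ← Category.assoc, ← hc2, Category.assoc, ← Functor.map_comp]
    simp
  have isoA : IsIso (c' ≫ c) := by
    have := isIso₃_of_isIso₁₂ (Triangle.homMk (Triangle.mk (biprod.map (𝟙 M) ψ) π'' θ'')
      (Triangle.mk (biprod.map (𝟙 M) ψ) π'' θ'') (𝟙 _) (𝟙 _) (c' ≫ c)
      (by simp [Triangle.mk]) (by simpa [Triangle.mk] using E1) (by simpa [Triangle.mk] using E2.symm)) memBig memBig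
      (by exact inferInstanceAs (IsIso (𝟙 _))) (by exact inferInstanceAs (IsIso (𝟙 _)))
    exact this
  have isoB : IsIso (c ≫ c') := by
    have := isIso₃_of_isIso₁₂ (Triangle.homMk (Triangle.mk ψ π θ) (Triangle.mk ψ π θ)
      (𝟙 _) (𝟙 _) (c ≫ c') (by simp [Triangle.mk]) (by simpa [Triangle.mk] using E3) (by simpa [Triangle.mk] using E4.symm)) mem mem
      (by exact inferInstanceAs (IsIso (𝟙 _))) (by exact inferInstanceAs (IsIso (𝟙 _)))
    exact this
  have hIso : IsIso c' := by
    refine ⟨c ≫ inv (c' ≫ c), ?_, ?_⟩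
    · rw [← Category.assoc, IsIso.hom_inv_id]
    · rw [← cancel_epi (c ≫ c')]
      rw [show (c ≫ c') ≫ (c ≫ inv (c' ≫ c)) ≫ c' = c ≫ ((c' ≫ c) ≫ inv (c' ≫ c)) ≫ c' by
        simp only [Category.assoc]]
      simp
  refine ⟨π'' ≫ c', inv c' ≫ θ'', ?_⟩
  refine isomorphic_distinguished _ memBig _ ?_
  exact Triangle.isoMk _ _ (Iso.refl _) (Iso.refl _) (asIso c').symm
    (by simp [Triangle.mk]) (by simp [Triangle.mk]) (by simp [Triangle.mk])
lemma smdSet_self {S : Set T} {X : T} (hX : X ∈ S) : X ∈ smdSet T S :=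
  ⟨X, hX, 𝟙 X, 𝟙 X, Category.comp_id _⟩

lemma smdSet_retract {S : Set T} {X Y : T} (i : X ⟶ Y) (r : Y ⟶ X) (hir : i ≫ r = 𝟙 X)
    (hY : Y ∈ smdSet T S) : X ∈ smdSet T S := by
  obtain ⟨Z, hZ, i', r', h'⟩ := hY
  exact ⟨Z, hZ, i ≫ i', r' ≫ r, by
    rw [Category.assoc, ← Category.assoc i', h', Category.id_comp, hir]⟩

lemma genBar_retract {S : Set T} {m n : ℤ} :
    ∀ (k : ℕ) {X Y : T} (i : X ⟶ Y) (r : Y ⟶ X), i ≫ r = 𝟙 X →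
      Y ∈ genBar T S m n k → X ∈ genBar T S m n k
  | 0 => by intro i r hir h; exact absurd h (by simp [genBar])
  | 1 => by
      intro i r hir hY
      exact smdSet_retract i r hir hY
  | (k+2) => by
      intro i r hir hY
      exact smdSet_retract i r hir hY

lemma genBar_iso {S : Set T} {m n : ℤ} {k : ℕ} {X Y : T} (e : X ≅ Y)
    (hY : Y ∈ genBar T S m n k) : X ∈ genBar T S m n k :=
  genBar_retract k e.hom e.inv e.hom_inv_id hY

lemma genBar_splice {S : Set T} {m n : ℤ} {k : ℕ} (hk : 1 ≤ k) {s E Q : T}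
    {f : s ⟶ E} {g : E ⟶ Q} {h : Q ⟶ s⟦(1:ℤ)⟧} (mem : Triangle.mk f g h ∈ distTriang T)
    (hs : s ∈ smdSet T (addInf T (intervalSet T S m n))) (hQ : Q ∈ genBar T S m n k) :
    E ∈ genBar T S m n (k+1) := by
  obtain ⟨k', rfl⟩ := Nat.exists_eq_add_of_le hk
  have he : 1 + k' + 1 = k' + 2 := by omega
  rw [he]
  have hQ' : Q ∈ genBar T S m n (k' + 1) := by rwa [show 1 + k' = k' + 1 by omega] at hQ
  exact smdSet_self ⟨s, Q, f, g, h, mem, hs, hQ'⟩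

lemma intervalSet_mono {S : Set T} {m n m' n' : ℤ} (hm : m' ≤ m) (hn : n ≤ n') :
    intervalSet T S m n ⊆ intervalSet T S m' n' := by
  rintro X ⟨a, ha, i, h1, h2, hiso⟩
  exact ⟨a, ha, i, by omega, by omega, hiso⟩

lemma addInf_mono {S S' : Set T} (hS : S ⊆ S') : addInf T S ⊆ addInf T S' := by
  rintro X ⟨J, f, c, hc, hf, hiso⟩
  exact ⟨J, f, c, hc, fun j => hS (hf j), hiso⟩

lemma smdSet_mono {S S' : Set T} (hS : S ⊆ S') : smdSet T S ⊆ smdSet T S' := by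
  rintro X ⟨Y, hY, i, r, hir⟩
  exact ⟨Y, hS hY, i, r, hir⟩

lemma starSet_mono {A B A' B' : Set T} (hA : A ⊆ A') (hB : B ⊆ B') :
    starSet T A B ⊆ starSet T A' B' := by
  rintro X ⟨a, b, f, g, h, mem, ha, hb⟩
  exact ⟨a, b, f, g, h, mem, hA ha, hB hb⟩

lemma genBar_mono {S : Set T} {m n m' n' : ℤ} (hm : m' ≤ m) (hn : n ≤ n') :
    ∀ k, genBar T S m n k ⊆ genBar T S m' n' k
  | 0 => by simp [genBar]
  | 1 => by
      intro X hX
      exact smdSet_mono (addInf_mono (intervalSet_mono hm hn)) hX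
  | (k+2) => by
      intro X hX
      exact smdSet_mono (starSet_mono (smdSet_mono (addInf_mono (intervalSet_mono hm hn)))
        (genBar_mono hm hn (k+1))) hX

lemma intervalSet_shift {S : Set T} {m n : ℤ} {X : T} (hX : X ∈ intervalSet T S m n) :
    X⟦(1:ℤ)⟧ ∈ intervalSet T S (m-1) (n-1) := by
  obtain ⟨a, ha, i, h1, h2, ⟨iso⟩⟩ := hX
  refine ⟨a, ha, i - 1, by omega, by omega, ⟨?_⟩⟩
  exact (shiftFunctor T (1:ℤ)).mapIso iso ≪≫
    ((shiftFunctorAdd' T (-i) 1 (-(i-1)) (by ring)).symm.app a)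

lemma addInf_shift {S S' : Set T} (hS : ∀ Z ∈ S, Z⟦(1:ℤ)⟧ ∈ S') {X : T}
    (hX : X ∈ addInf T S) : X⟦(1:ℤ)⟧ ∈ addInf T S' := by
  obtain ⟨J, f, c, ⟨hc⟩, hf, ⟨iso⟩⟩ := hX
  let e := shiftEquiv T (1:ℤ)
  let adj := e.toAdjunction
  refine ⟨J, fun j => (f j)⟦(1:ℤ)⟧,
    Cofan.mk (c.pt⟦(1:ℤ)⟧) (fun j => (shiftFunctor T (1:ℤ)).map (c.inj j)), ⟨?_⟩,
    fun j => hS _ (hf j), ⟨(shiftFunctor T (1:ℤ)).mapIso iso⟩⟩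
  refine mkCofanColimit _
    (fun t => (adj.homEquiv c.pt t.pt).symm
      (Cofan.IsColimit.desc hc (fun j => adj.homEquiv _ _ (t.inj j)))) ?_ ?_
  · intro t j
    show e.functor.map (c.inj j) ≫ (adj.homEquiv c.pt t.pt).symm
      (Cofan.IsColimit.desc hc (fun j => adj.homEquiv _ _ (t.inj j))) = t.inj j
    rw [← Adjunction.homEquiv_naturality_left_symm, Cofan.IsColimit.fac hc]
    exact Equiv.symm_apply_apply _ _
  · intro t mm hmm
    have key : (adj.homEquiv c.pt t.pt) mm
        = Cofan.IsColimit.desc hc (fun j => adj.homEquiv _ _ (t.inj j)) := by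
      apply Cofan.IsColimit.hom_ext hc
      intro j
      erw [Cofan.IsColimit.fac hc, ← Adjunction.homEquiv_naturality_left]
      rw [show e.functor.map (c.inj j) ≫ mm = t.inj j from hmm j]
    exact (Equiv.symm_apply_apply _ mm).symm.trans (congrArg _ key)

lemma smdSet_shift {S S' : Set T} (hS : ∀ Z ∈ S, Z⟦(1:ℤ)⟧ ∈ S') {X : T}
    (hX : X ∈ smdSet T S) : X⟦(1:ℤ)⟧ ∈ smdSet T S' := by
  obtain ⟨Y, hY, i, r, hir⟩ := hX
  exact ⟨Y⟦(1:ℤ)⟧, hS Y hY, (shiftFunctor T (1:ℤ)).map i, (shiftFunctor T (1:ℤ)).map r,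
    by rw [← Functor.map_comp, hir, CategoryTheory.Functor.map_id]⟩

lemma starSet_shift {A B A' B' : Set T} (hA : ∀ Z ∈ A, Z⟦(1:ℤ)⟧ ∈ A')
    (hB : ∀ Z ∈ B, Z⟦(1:ℤ)⟧ ∈ B') {X : T} (hX : X ∈ starSet T A B) :
    X⟦(1:ℤ)⟧ ∈ starSet T A' B' := by
  obtain ⟨a, b, f, g, h, mem, ha, hb⟩ := hX
  have m3 := rot_of_distTriang _ (rot_of_distTriang _ (rot_of_distTriang _ mem))
  exact ⟨a⟦(1:ℤ)⟧, b⟦(1:ℤ)⟧, -((shiftFunctor T (1:ℤ)).map f), -((shiftFunctor T (1:ℤ)).map g),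
    -((shiftFunctor T (1:ℤ)).map h), m3, hA a ha, hB b hb⟩

lemma genBar_shift {S : Set T} {m n : ℤ} :
    ∀ k {X : T}, X ∈ genBar T S m n k → X⟦(1:ℤ)⟧ ∈ genBar T S (m-1) (n-1) k
  | 0 => by simp [genBar]
  | 1 => by
      intro hX
      exact smdSet_shift (fun Z hZ => addInf_shift (fun W hW => intervalSet_shift hW) hZ) hX
  | (k+2) => by
      intro hX
      refine smdSet_shift (fun Z hZ => starSet_shift
        (fun W hW => smdSet_shift (fun V hV => addInf_shift
          (fun U hU => intervalSet_shift hU) hV) hW)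
        (fun W hW => genBar_shift (k+1) hW) hZ) hX
lemma masterL (S : Set T) (u v cr : ℤ) (l : ℕ) (hl : 1 ≤ l)
    (hyp : ∀ Z : T, t.le (-1) Z → ∃ (E' D' : T) (f' : E' ⟶ Z) (g' : Z ⟶ D')
      (h' : D' ⟶ E'⟦(1:ℤ)⟧), (Triangle.mk f' g' h' ∈ distTriang T) ∧ t.le cr D' ∧
      E' ∈ genBar T S u v l) :
    ∀ (k : ℕ) (B F D : T) (ψ : B ⟶ F) (π : F ⟶ D) (θ : D ⟶ B⟦(1:ℤ)⟧),
      (Triangle.mk ψ π θ ∈ distTriang T) → t.le (-1) D → B ∈ genBar T S u v (k+1) →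
      ∃ (E : T) (w : E ⟶ F) (C : T) (g : F ⟶ C) (h : C ⟶ E⟦(1:ℤ)⟧),
        (Triangle.mk w g h ∈ distTriang T) ∧ t.le cr C ∧ E ∈ genBar T S u v (k+1+l) ∧
        ∃ jB : B ⟶ E, jB ≫ w = ψ := by
  intro k
  induction k with
  | zero =>
    intro B F D ψ π θ memT hD hB
    obtain ⟨E', D', f', g', h', memA, hD', hE'⟩ := hyp D hD
    obtain ⟨E, α, q, memE⟩ := distinguished_cocone_triangle₂ (f' ≫ θ)
    obtain ⟨w, hw1, hw2⟩ := complete_distinguished_triangle_morphism₂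
      (Triangle.mk α q (f' ≫ θ)) (Triangle.mk ψ π θ) memE memT (𝟙 B) f' (by simp [Triangle.mk])
    replace hw1 : α ≫ w = ψ := by simpa [Triangle.mk] using hw1
    replace hw2 : w ≫ π = q ≫ f' := hw2.symm
    obtain ⟨winj, wsurj⟩ := chaseB t cr memE memT hw1 hw2
      (fun Y hY => approxInj t cr memA hD' Y hY) (fun Y hY => approxSurj t cr memA hD' Y hY)
    obtain ⟨C, gC, hC, memC⟩ := distinguished_cocone_triangle w
    have hLC : t.le cr C := approxOfInjSurj t cr memC winj wsurj
    have hs : B ∈ smdSet T (addInf T (intervalSet T S u v)) := hB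
    have hmem : E ∈ genBar T S u v (l+1) := genBar_splice hl memE hs hE'
    rw [show l+1 = 0+1+l by omega] at hmem
    exact ⟨E, w, C, gC, hC, memC, hLC, hmem, α, hw1⟩
  | succ k ih =>
    intro B F D ψ π θ memT hD hB
    obtain ⟨Bh0, hBh0, i0, r0, hir0⟩ := hB
    obtain ⟨s, B₂, a0, p0, δ, memStar, hs, hB₂⟩ := hBh0
    obtain ⟨M, nM, e, memSplit, hn, hr⟩ := splitCompl i0 r0 hir0
    have memStar' : Triangle.mk (a0 ≫ e.hom) (e.inv ≫ p0) δ ∈ distTriang T := by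
      refine isomorphic_distinguished _ memStar _ ?_
      exact Triangle.isoMk _ _ (Iso.refl _) e.symm (Iso.refl _) (by simp [Triangle.mk]) (by simp [Triangle.mk]) (by simp [Triangle.mk])
    obtain ⟨π', θ', memSum⟩ := sumContractible (M := M) memT
    obtain ⟨F₁, π₁, θ₁, memR2⟩ :=
      distinguished_cocone_triangle ((a0 ≫ e.hom) ≫ biprod.map (𝟙 M) ψ)
    obtain ⟨ψ₂, hψ₂1, hψ₂2⟩ := complete_distinguished_triangle_morphism
      (Triangle.mk (a0 ≫ e.hom) (e.inv ≫ p0) δ)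
      (Triangle.mk ((a0 ≫ e.hom) ≫ biprod.map (𝟙 M) ψ) π₁ θ₁)
      memStar' memR2 (𝟙 s) (biprod.map (𝟙 M) ψ) (by simp [Triangle.mk])
    replace hψ₂1 : (e.inv ≫ p0) ≫ ψ₂ = biprod.map (𝟙 M) ψ ≫ π₁ := hψ₂1
    replace hψ₂2 : ψ₂ ≫ θ₁ = δ := by simpa [Triangle.mk] using hψ₂2.symm
    obtain ⟨ainj, asurj⟩ := chaseA t memStar' memR2 memSum hD hψ₂1 hψ₂2
    obtain ⟨D₂, π₂, θ₂, memT2⟩ := distinguished_cocone_triangle ψ₂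
    have hD₂ : t.le (-1) D₂ := approxOfInjSurj t (-1) memT2
      (fun Y hY => ainj Y (by rwa [show (-1:ℤ)+1 = 0 by ring] at hY))
      (fun Y hY => asurj Y (by rwa [show (-1:ℤ)+2 = 1 by ring] at hY))
    obtain ⟨E₂, e₂, C₂, g₂, h₂, memC₂, hC₂, hE₂, jB₂, hjB₂⟩ :=
      ih B₂ F₁ D₂ ψ₂ π₂ θ₂ memT2 hD₂ hB₂
    obtain ⟨E, α, q, memE⟩ := distinguished_cocone_triangle₂ (e₂ ≫ θ₁)
    obtain ⟨w0, hw10, hw20⟩ := complete_distinguished_triangle_morphism₂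
      (Triangle.mk α q (e₂ ≫ θ₁))
      (Triangle.mk ((a0 ≫ e.hom) ≫ biprod.map (𝟙 M) ψ) π₁ θ₁) memE memR2
      (𝟙 s) e₂ (by simp [Triangle.mk])
    obtain ⟨w, hw1, hw2⟩ : ∃ w : E ⟶ M ⊞ F,
        α ≫ w = (a0 ≫ e.hom) ≫ biprod.map (𝟙 M) ψ ∧ w ≫ π₁ = q ≫ e₂ :=
      ⟨w0, by simpa [Triangle.mk] using hw10, hw20.symm⟩
    obtain ⟨winj, wsurj⟩ := chaseB t cr memE memR2 hw1 hw2
      (fun Y hY => approxInj t cr memC₂ hC₂ Y hY) (fun Y hY => approxSurj t cr memC₂ hC₂ Y hY)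
    have z23R2 : π₁ ≫ θ₁ = 0 := comp_distTriang_mor_zero₂₃ _ memR2
    have z23S : (e.inv ≫ p0) ≫ δ = 0 := comp_distTriang_mor_zero₂₃ _ memStar'
    obtain ⟨j0, hj0⟩ := coyoneda₃' memE ((e.inv ≫ p0) ≫ jB₂) (by
      erw [Category.assoc, ← Category.assoc jB₂ e₂ θ₁, hjB₂, hψ₂2]
      exact z23S)
    have hdiff : (j0 ≫ w - biprod.map (𝟙 M) ψ) ≫ π₁ = 0 := by
      have e1 : j0 ≫ w ≫ π₁ = (e.inv ≫ p0) ≫ ψ₂ := by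
        rw [hw2, ← Category.assoc, ← hj0, Category.assoc, hjB₂]; rfl
      have e2 : (j0 ≫ w) ≫ π₁ = biprod.map (𝟙 M) ψ ≫ π₁ := by
        rw [Category.assoc, e1, hψ₂1]
      rw [sub_comp, e2, sub_self]
    obtain ⟨μ, hμ⟩ := coyoneda₂' memR2 (j0 ≫ w - biprod.map (𝟙 M) ψ) hdiff
    have hjhatw : (j0 - μ ≫ α) ≫ w = biprod.map (𝟙 M) ψ := by
      rw [sub_comp, Category.assoc, hw1, ← hμ]
      abel
    have hsec : (biprod.inl ≫ (j0 - μ ≫ α)) ≫ (w ≫ biprod.fst) = 𝟙 M := by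
      rw [Category.assoc, ← Category.assoc (j0 - μ ≫ α) w biprod.fst, hjhatw, biprod.map_fst]
      simp
    obtain ⟨Ed, nE, eE, memK, hnE, hrE⟩ :=
      splitCompl (biprod.inl ≫ (j0 - μ ≫ α)) (w ≫ biprod.fst) hsec
    obtain ⟨dinj, dsurj⟩ := chaseC t cr memK winj wsurj
    obtain ⟨Cf, gf, hf, memCf⟩ := distinguished_cocone_triangle (nE ≫ w ≫ biprod.snd)
    have hLCf : t.le cr Cf := approxOfInjSurj t cr memCf dinj dsurj
    have hE : E ∈ genBar T S u v ((k+1+l)+1) := genBar_splice (by omega) memE hs hE₂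
    have hEd : Ed ∈ genBar T S u v (k+1+1+l) := by
      rw [show (k+1+l)+1 = k+1+1+l by omega] at hE
      exact genBar_retract _ nE (eE.hom ≫ biprod.fst)
        (by rw [← Category.assoc, hnE]; simp) hE
    have hj1 : (biprod.inr ≫ (j0 - μ ≫ α)) ≫ (w ≫ biprod.fst) = 0 := by
      rw [Category.assoc, ← Category.assoc (j0 - μ ≫ α) w biprod.fst, hjhatw, biprod.map_fst]
      simp
    obtain ⟨jB, hjB⟩ := coyoneda₂' memK (biprod.inr ≫ (j0 - μ ≫ α)) hj1
    refine ⟨Ed, nE ≫ w ≫ biprod.snd, Cf, gf, hf, memCf, hLCf, hEd, jB, ?_⟩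
    have e3 : (jB ≫ nE) ≫ (w ≫ biprod.snd) = ψ := by
      rw [← hjB, Category.assoc, ← Category.assoc (j0 - μ ≫ α) w biprod.snd, hjhatw,
        biprod.map_snd]
      simp
    simpa [Category.assoc] using e3

end Helpers

/-- In an approximable category (with witnessing data `G`, `t`, `A`), objects of
`T^{≤0}` can be approximated to arbitrary order: for every `m > 0` and `F ∈ T^{≤0}`
there is a triangle `E ⟶ F ⟶ D ⟶ E[1]` with `D ∈ T^{≤-m}` and
`E ∈ ⟨G⟩‾_{mA}^{[1-m-A, A]}`. -/
theorem approximation_to_arbitrary_order [HasCoproducts.{v} T]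
    (G : T) (hcpt : IsCompactObj T G)
    (hgen : ∀ X : T, (∀ (n : ℤ) (f : G ⟶ X⟦n⟧), f = 0) → IsZero X)
    (t : Triangulated.TStructure T) (A : ℕ) (hA : 0 < A)
    (h₁ : t.le 0 (G⟦(A : ℤ)⟧))
    (h₂ : ∀ X : T, t.le 0 X → ∀ f : G⟦(-(A : ℤ))⟧ ⟶ X, f = 0)
    (h₃ : ∀ F : T, t.le 0 F →
      ∃ (E : T) (D : T) (f : E ⟶ F) (g : F ⟶ D) (h : D ⟶ E⟦(1 : ℤ)⟧),
        (Triangle.mk f g h ∈ distTriang T) ∧ t.le (-1) D ∧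
        E ∈ genBar T {G} (-(A : ℤ)) (A : ℤ) A)
    (m : ℕ) (hm : 0 < m) (F : T) (hF : t.le 0 F) :
    ∃ (E : T) (D : T) (f : E ⟶ F) (g : F ⟶ D) (h : D ⟶ E⟦(1 : ℤ)⟧),
      (Triangle.mk f g h ∈ distTriang T) ∧ t.le (-(m : ℤ)) D ∧
      E ∈ genBar T {G} (1 - (m : ℤ) - (A : ℤ)) (A : ℤ) (m * A) := by
  induction m, hm using Nat.le_induction generalizing F with
  | base =>
    obtain ⟨E, D, f, g, h, mem, hD, hE⟩ := h₃ F hF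
    refine ⟨E, D, f, g, h, mem, ?_, ?_⟩
    · have : (-((1:ℕ):ℤ)) = -1 := by norm_num
      rw [this]; exact hD
    · have h1 : (1 - ((1:ℕ):ℤ) - (A:ℤ)) = -(A:ℤ) := by push_cast; ring
      have h2 : 1 * A = A := Nat.one_mul A
      rw [h1, h2]; exact hE
  | succ m hm ih =>
    obtain ⟨E₁, D₁, f₁, g₁, h₁, mem₁, hD₁, hE₁⟩ := h₃ F hF
    set u : ℤ := 1 - ((m+1 : ℕ) : ℤ) - (A:ℤ) with hu
    set cr : ℤ := -((m+1 : ℕ) : ℤ) with hcr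
    have hyp : ∀ Z : T, t.le (-1) Z → ∃ (E' D' : T) (f' : E' ⟶ Z) (g' : Z ⟶ D')
        (h' : D' ⟶ E'⟦(1:ℤ)⟧), (Triangle.mk f' g' h' ∈ distTriang T) ∧ t.le cr D' ∧
        E' ∈ genBar T {G} u (A:ℤ) (m*A) := by
      intro Z hZ
      have hZ' : t.le 0 (Z⟦(-1:ℤ)⟧) := t.le_shift (-1) (-1) 0 (by omega) Z hZ
      obtain ⟨E₀, D₀, f₀, g₀, h₀, mem₀, hD₀, hE₀⟩ := ih (Z⟦(-1:ℤ)⟧) hZ'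
      have m3 := rot_of_distTriang _ (rot_of_distTriang _ (rot_of_distTriang _ mem₀))
      set cI := (shiftEquiv T (1:ℤ)).counitIso.app Z with hcI
      refine ⟨E₀⟦(1:ℤ)⟧, D₀⟦(1:ℤ)⟧,
        (-((shiftFunctor T (1:ℤ)).map f₀)) ≫ cI.hom,
        cI.inv ≫ (-((shiftFunctor T (1:ℤ)).map g₀)),
        -((shiftFunctor T (1:ℤ)).map h₀), ?_, ?_, ?_⟩
      · refine isomorphic_distinguished _ m3 _ ?_
        exact Triangle.isoMk _ _ (Iso.refl _) cI.symm (Iso.refl _)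
          (by simp [Triangle.mk, Triangle.rotate]; erw [Category.assoc, Iso.hom_inv_id, Category.comp_id])
          (by simp [Triangle.mk, Triangle.rotate]; rfl) (by simp [Triangle.mk, Triangle.rotate])
      · have : t.le (-(m:ℤ) - 1) (D₀⟦(1:ℤ)⟧) :=
          t.le_shift (-(m:ℤ)) 1 (-(m:ℤ)-1) (by omega) D₀ hD₀
        have hcast : cr = -(m:ℤ) - 1 := by rw [hcr]; push_cast; ring
        rw [hcast]; exact this
      · have h1 := genBar_shift (S := ({G} : Set T)) (m := 1 - (m:ℤ) - (A:ℤ)) (n := (A:ℤ))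
          (m*A) hE₀
        refine genBar_mono ?_ ?_ (m*A) h1
        · rw [hu]; push_cast; omega
        · omega
    have hE₁' : E₁ ∈ genBar T {G} u (A:ℤ) ((A-1)+1) := by
      rw [show (A-1)+1 = A from by omega]
      refine genBar_mono ?_ le_rfl A hE₁
      rw [hu]; push_cast; omega
    obtain ⟨E, w, C, gC, hC, memC, hLC, hE, jB, hjB⟩ :=
      masterL t {G} u (A:ℤ) cr (m*A) (Nat.mul_pos hm hA) hyp (A-1) E₁ F D₁ f₁ g₁ h₁
        mem₁ hD₁ hE₁'
    refine ⟨E, C, w, gC, hC, memC, hLC, ?_⟩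
    have : (A-1)+1+(m*A) = (m+1)*A := by
      rw [Nat.succ_mul]
      omega
    rwa [this] at hE
end
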